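/- arXiv:1508.07262 — 5 statements merged into one kernel-verified Lean document; each statement's English description precedes it below -/
import Mathlib

section
/- Let X be the constructed set and let X_1, ..., X_r be a Tverberg partition of X with Tverberg point p ∈ ℝ^d. Then p = 0; that is, the origin is the only possible Tverberg point of X. -/
open Finset Set

/-- The standard basis vector `e^j` of `ℝ^d`. -/
noncomputable def stdVec (d : ℕ) (j : Fin d) : Fin d → ℝ := Pi.single j 1

/-- The set `A_j = {e^j, 2e^j, ..., (r-1)e^j}`. -/
def Aset (d r : ℕ) (j : Fin d) : Set (Fin d → ℝ) :=
  {v | ∃ k : ℕ, 1 ≤ k ∧ k ≤ r - 1 ∧ v = (k : ℝ) • stdVec d j}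

/-- The point `x^i`, with `x^i_j = 0` if `i = i(j)` and `x^i_j = -i` otherwise
(indices taken in `{1,...,r}`, so `Fin r` index `i` corresponds to `i+1`). -/
def xpt (d r : ℕ) (ι : Fin d → Fin r) (i : Fin r) : Fin d → ℝ :=
  fun j => if ι j = i then 0 else -((i : ℕ) + 1 : ℝ)

/-- The set `A = {x^1, ..., x^r}`. -/
def Apts (d r : ℕ) (ι : Fin d → Fin r) : Set (Fin d → ℝ) := Set.range (xpt d r ι)

/-- The constructed set `X = A ∪ A_1 ∪ ⋯ ∪ A_d`. -/
def Xset (d r : ℕ) (ι : Fin d → Fin r) : Set (Fin d → ℝ) :=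
  Apts d r ι ∪ ⋃ j, Aset d r j

/-- `P : Fin r → Set (Fin d → ℝ)` is a Tverberg partition of `X`:
a partition of `X` into pairwise disjoint parts whose convex hulls share a point. -/
def IsTverbergPartition (d r : ℕ) (X : Set (Fin d → ℝ))
    (P : Fin r → Set (Fin d → ℝ)) : Prop :=
  (⋃ i, P i) = X ∧ (∀ i i', i ≠ i' → Disjoint (P i) (P i')) ∧
    ∃ p : Fin d → ℝ, ∀ i, p ∈ convexHull ℝ (P i)


/-
Fix a coordinate `j`. Since `p` lies in the convex hull of every part, a nonzero `p j` forces every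
part to contain a point of `X` whose `j`-th coordinate has the same sign as `p j`. The points of `X`
with negative `j`-th coordinate are the `x^i` with `i ≠ i(j)`, and those with positive `j`-th
coordinate are the points of `A_j`; in both cases there are only `r - 1` of them, too few to meet
`r` disjoint parts.
-/

open Function in
theorem Fintype.card_le_of_pairwise_disjoint_of_forall_exists_mem {α ι : Type*} [Fintype ι]
    {P : ι → Set α} (hP : Pairwise (Disjoint on P)) {T : Finset α} (hT : ∀ i, ∃ x ∈ P i, x ∈ T) :
    Fintype.card ι ≤ T.card := by
  choose f hfP hfT using hT
  have hf : Set.InjOn f (univ : Finset ι) := fun i _ i' _ h => by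
    by_contra hne
    exact Set.disjoint_left.1 (hP hne) (hfP i) (h ▸ hfP i')
  simpa using Finset.card_le_card_of_injOn f (fun i _ => hfT i) hf

lemma exists_mem_apply_le_of_mem_convexHull {n : Type*} {s : Set (n → ℝ)} {p : n → ℝ}
    (hp : p ∈ convexHull ℝ s) (j : n) : ∃ x ∈ s, x j ≤ p j :=
  ((LinearMap.proj j : (n → ℝ) →ₗ[ℝ] ℝ).concaveOn convex_univ).exists_le_of_mem_convexHull
    (Set.subset_univ s) hp

lemma exists_mem_le_apply_of_mem_convexHull {n : Type*} {s : Set (n → ℝ)} {p : n → ℝ}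
    (hp : p ∈ convexHull ℝ s) (j : n) : ∃ x ∈ s, p j ≤ x j :=
  ((LinearMap.proj j : (n → ℝ) →ₗ[ℝ] ℝ).convexOn convex_univ).exists_ge_of_mem_convexHull
    (Set.subset_univ s) hp

section Xset

variable {d r : ℕ} {ι : Fin d → Fin r} {x : Fin d → ℝ} {j : Fin d}

lemma xpt_apply_nonpos (i : Fin r) : xpt d r ι i j ≤ 0 := by
  unfold xpt
  split <;> linarith

lemma smul_stdVec_apply_nonneg (k : ℕ) (j' : Fin d) : 0 ≤ ((k : ℝ) • stdVec d j') j := by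
  simp only [Pi.smul_apply, smul_eq_mul, stdVec, Pi.single_apply]
  split <;> simp

lemma mem_image_xpt_of_mem_Xset_of_apply_neg (hx : x ∈ Xset d r ι) (hxj : x j < 0) :
    x ∈ (univ.erase (ι j)).image (xpt d r ι) := by
  rcases hx with ⟨i, rfl⟩ | hx
  · refine Finset.mem_image_of_mem _ (Finset.mem_erase.2 ⟨fun hi => ?_, Finset.mem_univ i⟩)
    simp [xpt, hi] at hxj
  · obtain ⟨j', k, -, -, rfl⟩ := Set.mem_iUnion.1 hx
    exact absurd hxj (smul_stdVec_apply_nonneg k j').not_gt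

lemma mem_image_smul_stdVec_of_mem_Xset_of_apply_pos (hx : x ∈ Xset d r ι) (hxj : 0 < x j) :
    x ∈ (Finset.Icc 1 (r - 1)).image (fun k : ℕ => (k : ℝ) • stdVec d j) := by
  rcases hx with ⟨i, rfl⟩ | hx
  · exact absurd hxj (xpt_apply_nonpos i).not_gt
  · obtain ⟨j', k, hk1, hk2, rfl⟩ := Set.mem_iUnion.1 hx
    obtain rfl : j' = j := by
      by_contra hne
      simp [stdVec, Ne.symm hne] at hxj
    exact Finset.mem_image_of_mem _ (Finset.mem_Icc.2 ⟨hk1, hk2⟩)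

end Xset

theorem tverberg_point_eq_zero_general (d r : ℕ)
    (ι : Fin d → Fin r)
    (P : Fin r → Set (Fin d → ℝ))
    (hunion : (⋃ i, P i) = Xset d r ι)
    (hdisj : ∀ i i', i ≠ i' → Disjoint (P i) (P i'))
    (p : Fin d → ℝ) (hp : ∀ i, p ∈ convexHull ℝ (P i)) :
    p = 0 := by
  funext j
  by_contra hpj
  have hX : ∀ i, P i ⊆ Xset d r ι := fun i => hunion ▸ Set.subset_iUnion P i
  have hr : 0 < r := (ι j).pos
  rcases lt_or_gt_of_ne hpj with hneg | hpos
  · have hcard := Fintype.card_le_of_pairwise_disjoint_of_forall_exists_mem hdisj fun i => by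
      obtain ⟨x, hx, hxj⟩ := exists_mem_apply_le_of_mem_convexHull (hp i) j
      exact ⟨x, hx, mem_image_xpt_of_mem_Xset_of_apply_neg (hX i hx) (hxj.trans_lt hneg)⟩
    have := hcard.trans Finset.card_image_le
    simp only [Fintype.card_fin, Finset.card_erase_of_mem (Finset.mem_univ _),
      Finset.card_univ] at this
    omega
  · have hcard := Fintype.card_le_of_pairwise_disjoint_of_forall_exists_mem hdisj fun i => by
      obtain ⟨x, hx, hxj⟩ := exists_mem_le_apply_of_mem_convexHull (hp i) j
      exact ⟨x, hx, mem_image_smul_stdVec_of_mem_Xset_of_apply_pos (hX i hx) (hpos.trans_le hxj)⟩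
    have := hcard.trans Finset.card_image_le
    simp only [Fintype.card_fin, Nat.card_Icc] at this
    omega

/-- Lemma 3.1: for the constructed set `X`, the only Tverberg point is the origin. -/
theorem tverberg_point_eq_zero (d r : ℕ) (hd : 1 ≤ d) (hr : 1 ≤ r)
    (a : Fin r → ℕ) (hpos : ∀ i, 1 ≤ a i) (hle : ∀ i, a i ≤ d + 1)
    (hsum : ∑ i, a i = (d + 1) * (r - 1) + 1)
    (ι : Fin d → Fin r)
    (hι : ∀ i, (Finset.univ.filter fun j => ι j = i).card = d + 1 - a i)
    (P : Fin r → Set (Fin d → ℝ))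
    (hunion : (⋃ i, P i) = Xset d r ι)
    (hdisj : ∀ i i', i ≠ i' → Disjoint (P i) (P i'))
    (p : Fin d → ℝ) (hp : ∀ i, p ∈ convexHull ℝ (P i)) :
    p = 0 :=
  tverberg_point_eq_zero_general d r ι P hunion hdisj p hp
end

section
/- Let X be the constructed set, fix a coordinate j with 1 ≤ j ≤ d. Then exactly r−1 points x of X satisfy x_j > 0 (namely the points of A_j), and exactly r−1 points x of X satisfy x_j < 0 (namely the points x^i with i ≠ i(j)). -/
open Finset Set

/-!
Every point of `A_{j'}` has `j`-th coordinate `0` unless `j' = j`, where it is positive, and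
`x^i_j` is `0` for `i = i(j)` and negative otherwise. So the positive part of `X` in coordinate
`j` is `A_j` and the negative part is `{x^i | i ≠ i(j)}`; both are injective images of
`r - 1` indices, since the nonzero `j`-th coordinates `k`, resp. `-(i + 1)`, are distinct.
-/

section Coordinates

variable {d r : ℕ}

theorem stdVec_apply_self (j : Fin d) : stdVec d j j = 1 :=
  Pi.single_eq_same j 1

theorem stdVec_apply_of_ne {j j' : Fin d} (h : j' ≠ j) : stdVec d j' j = 0 :=
  Pi.single_eq_of_ne' h 1

theorem xpt_apply_of_eq {ι : Fin d → Fin r} {i : Fin r} {j : Fin d} (h : ι j = i) :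
    xpt d r ι i j = 0 :=
  if_pos h

theorem xpt_apply_of_ne {ι : Fin d → Fin r} {i : Fin r} {j : Fin d} (h : ι j ≠ i) :
    xpt d r ι i j = -((i : ℕ) + 1 : ℝ) :=
  if_neg h

theorem xpt_apply_neg_iff {ι : Fin d → Fin r} {i : Fin r} {j : Fin d} :
    xpt d r ι i j < 0 ↔ ι j ≠ i := by
  by_cases h : ι j = i
  · simp [xpt_apply_of_eq h, h]
  · simp only [xpt_apply_of_ne h, ne_eq, h, not_false_eq_true, iff_true, Left.neg_neg_iff]
    positivity

theorem not_xpt_apply_pos (ι : Fin d → Fin r) (i : Fin r) (j : Fin d) :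
    ¬ 0 < xpt d r ι i j := by
  by_cases h : ι j = i
  · simp [xpt_apply_of_eq h]
  · exact (xpt_apply_neg_iff.mpr h).not_gt

theorem apply_nonneg_of_mem_Aset {j j' : Fin d} {v : Fin d → ℝ} (hv : v ∈ Aset d r j') :
    0 ≤ v j := by
  obtain ⟨k, -, -, rfl⟩ := hv
  by_cases h : j' = j
  · subst h
    simp [stdVec_apply_self]
  · simp [stdVec_apply_of_ne h]

theorem eq_of_mem_Aset_of_apply_pos {j j' : Fin d} {v : Fin d → ℝ} (hv : v ∈ Aset d r j')
    (hpos : 0 < v j) : j' = j := by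
  obtain ⟨k, -, -, rfl⟩ := hv
  by_contra h
  simp [stdVec_apply_of_ne h] at hpos

theorem Aset_eq_image (j : Fin d) :
    Aset d r j = (fun k : ℕ => (k : ℝ) • stdVec d j) '' Set.Icc 1 (r - 1) := by
  ext v
  simp only [Aset, Set.mem_ofPred_eq, Set.mem_image, Set.mem_Icc, and_assoc, eq_comm]

theorem ncard_Aset (j : Fin d) : (Aset d r j).ncard = r - 1 := by
  have hinj : Set.InjOn (fun k : ℕ => (k : ℝ) • stdVec d j) (Set.Icc 1 (r - 1)) := by
    intro k _ k' _ h
    simpa [stdVec_apply_self] using congrFun h j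
  rw [Aset_eq_image, hinj.ncard_image, ← Finset.coe_Icc, Set.ncard_coe_finset,
    Nat.card_Icc, Nat.add_sub_cancel]

theorem ncard_xpt_image_ne (ι : Fin d → Fin r) (j : Fin d) :
    (xpt d r ι '' {i | i ≠ ι j}).ncard = r - 1 := by
  have hinj : Set.InjOn (xpt d r ι) {i | i ≠ ι j} := by
    intro i hi i' hi' h
    have hj := congrFun h j
    rw [xpt_apply_of_ne (Ne.symm hi), xpt_apply_of_ne (Ne.symm hi')] at hj
    exact Fin.ext (by exact_mod_cast neg_injective hj |> add_right_cancel)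
  have hcompl : {i | i ≠ ι j} = ((Finset.univ.erase (ι j) : Finset (Fin r)) : Set (Fin r)) := by
    ext i
    simp
  rw [hinj.ncard_image, hcompl, Set.ncard_coe_finset,
    Finset.card_erase_of_mem (Finset.mem_univ _), Finset.card_univ, Fintype.card_fin]

theorem Xset_sep_apply_pos (ι : Fin d → Fin r) (j : Fin d) :
    {x ∈ Xset d r ι | 0 < x j} = Aset d r j := by
  ext x
  constructor
  · rintro ⟨⟨i, rfl⟩ | hx, hxj⟩
    · exact absurd hxj (not_xpt_apply_pos ι i j)
    · obtain ⟨j', hj'⟩ := Set.mem_iUnion.mp hx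
      rwa [← eq_of_mem_Aset_of_apply_pos hj' hxj]
  · rintro hx
    refine ⟨Or.inr (Set.mem_iUnion.mpr ⟨j, hx⟩), ?_⟩
    obtain ⟨k, hk, -, rfl⟩ := hx
    have hk : (0 : ℝ) < k := by exact_mod_cast hk
    simpa [stdVec_apply_self] using hk

theorem Xset_sep_apply_neg (ι : Fin d → Fin r) (j : Fin d) :
    {x ∈ Xset d r ι | x j < 0} = xpt d r ι '' {i | i ≠ ι j} := by
  ext x
  constructor
  · rintro ⟨⟨i, rfl⟩ | hx, hxj⟩
    · exact ⟨i, Ne.symm (xpt_apply_neg_iff.mp hxj), rfl⟩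
    · obtain ⟨j', hj'⟩ := Set.mem_iUnion.mp hx
      exact absurd hxj (apply_nonneg_of_mem_Aset hj').not_gt
  · rintro ⟨i, hi, rfl⟩
    exact ⟨Or.inl ⟨i, rfl⟩, xpt_apply_neg_iff.mpr (Ne.symm hi)⟩

end Coordinates

theorem signed_points_in_coordinate_general (d r : ℕ)
    (ι : Fin d → Fin r)
    (j : Fin d) :
    {x ∈ Xset d r ι | 0 < x j} = Aset d r j ∧
    {x ∈ Xset d r ι | 0 < x j}.ncard = r - 1 ∧
    {x ∈ Xset d r ι | x j < 0} = {v | ∃ i : Fin r, i ≠ ι j ∧ v = xpt d r ι i} ∧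
    {x ∈ Xset d r ι | x j < 0}.ncard = r - 1 := by
  have hneg : {v | ∃ i : Fin r, i ≠ ι j ∧ v = xpt d r ι i} = xpt d r ι '' {i | i ≠ ι j} := by
    ext v
    simp only [Set.mem_ofPred_eq, Set.mem_image, eq_comm]
  rw [Xset_sep_apply_pos, Xset_sep_apply_neg, hneg]
  exact ⟨rfl, ncard_Aset j, rfl, ncard_xpt_image_ne ι j⟩

/-- In the constructed set `X`, for each coordinate `j`, exactly `r-1` points have
positive `j`-th coordinate (namely the points of `A_j`), and exactly `r-1` points
have negative `j`-th coordinate (namely the points `x^i` with `i ≠ i(j)`). -/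
theorem signed_points_in_coordinate (d r : ℕ) (hd : 1 ≤ d) (hr : 1 ≤ r)
    (a : Fin r → ℕ) (hpos : ∀ i, 1 ≤ a i) (hle : ∀ i, a i ≤ d + 1)
    (hsum : ∑ i, a i = (d + 1) * (r - 1) + 1)
    (ι : Fin d → Fin r)
    (hι : ∀ i, (Finset.univ.filter fun j => ι j = i).card = d + 1 - a i)
    (j : Fin d) :
    {x ∈ Xset d r ι | 0 < x j} = Aset d r j ∧
    {x ∈ Xset d r ι | 0 < x j}.ncard = r - 1 ∧
    {x ∈ Xset d r ι | x j < 0} = {v | ∃ i : Fin r, i ≠ ι j ∧ v = xpt d r ι i} ∧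
    {x ∈ Xset d r ι | x j < 0}.ncard = r - 1 :=
  signed_points_in_coordinate_general d r ι j
end

section
/- For any d, r ≥ 1 with n = (d+1)(r-1)+1, and any positive integers a_1, ..., a_r with a_i ≤ d+1 for all i and ∑ a_i = n, there exists a set X ⊆ ℝ^d of n points such that for every Tverberg partition X_1, ..., X_r of X, the multiset of cardinalities {|X_1|, ..., |X_r|} is a permutation of (a_1, ..., a_r). -/
set_option maxHeartbeats 1000000

open Set Metric

namespace TvbForced

noncomputable section

variable {d : ℕ}

lemma mem_hull_iff (Q : Finset (Fin d → ℝ)) (p : Fin d → ℝ) :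
    p ∈ convexHull ℝ (↑Q : Set (Fin d → ℝ)) ↔
      ∃ w : (Fin d → ℝ) → ℝ, (∀ z ∈ Q, 0 ≤ w z) ∧ ∑ z ∈ Q, w z = 1 ∧
        ∑ z ∈ Q, w z • z = p := by
  rw [Finset.convexHull_eq]
  constructor
  · rintro ⟨w, h0, h1, hc⟩
    refine ⟨w, h0, h1, ?_⟩
    rw [Finset.centerMass_eq_of_sum_1 _ id h1] at hc
    simpa using hc
  · rintro ⟨w, h0, h1, hs⟩
    refine ⟨w, h0, h1, ?_⟩
    rw [Finset.centerMass_eq_of_sum_1 _ id h1]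
    simpa using hs

lemma exists_gap {r : ℕ} (K : Fin r → Set (Fin d → ℝ)) (hr : 1 ≤ r)
    (hcpt : ∀ i, IsCompact (K i)) (hne : ∀ i, (K i).Nonempty)
    (hempty : (⋂ i, K i) = ∅) :
    ∃ θ : ℝ, 0 < θ ∧ ∀ q : Fin d → ℝ, ¬ (∀ i, infDist q (K i) ≤ θ) := by
  by_contra hcon
  push_neg at hcon
  -- hcon : ∀ θ, 0 < θ → ∃ q, ∀ i, infDist q (K i) ≤ θ
  have i0 : Fin r := ⟨0, hr⟩
  set A : ℕ → Set (Fin d → ℝ) := fun n => {q | ∀ i, infDist q (K i) ≤ 1 / (n + 1)} with hA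
  have hclosed : ∀ n, IsClosed (A n) := by
    intro n
    have : A n = ⋂ i, {q | infDist q (K i) ≤ 1 / (n + 1)} := by
      ext q; simp [hA]
    rw [this]
    exact isClosed_iInter fun i =>
      isClosed_le (continuous_infDist_pt (K i)) continuous_const
  obtain ⟨R0, hR0⟩ := (hcpt i0).isBounded.subset_closedBall 0
  have hsub : ∀ n, A n ⊆ closedBall (0 : Fin d → ℝ) (R0 + 2) := by
    intro n q hq
    have h1 : infDist q (K i0) ≤ 1 / (n + 1) := hq i0
    have h2 : (1 : ℝ) / (n + 1) < 2 := by
      have : (1:ℝ)/(n+1) ≤ 1 := by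
        rw [div_le_one (by positivity)]; linarith [Nat.cast_nonneg (α := ℝ) n]
      linarith
    obtain ⟨z, hz, hdz⟩ := (infDist_lt_iff (hne i0)).1 (lt_of_le_of_lt h1 h2)
    have hzb : ‖z‖ ≤ R0 := mem_closedBall_zero_iff.1 (hR0 hz)
    have : ‖q‖ ≤ R0 + 2 := by
      calc ‖q‖ = ‖z + (q - z)‖ := by ring_nf
        _ ≤ ‖z‖ + ‖q - z‖ := norm_add_le _ _
        _ ≤ R0 + 2 := by
            have : ‖q - z‖ = dist q z := (dist_eq_norm q z).symm
            rw [this]; linarith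
    exact mem_closedBall_zero_iff.2 this
  have hanti : ∀ n, A (n + 1) ⊆ A n := by
    intro n q hq i
    refine le_trans (hq i) ?_
    apply div_le_div_of_nonneg_left (by norm_num) (by positivity)
    push_cast; linarith
  have hnon : ∀ n, (A n).Nonempty := by
    intro n
    obtain ⟨q, hq⟩ := hcon (1 / (n + 1)) (by positivity)
    exact ⟨q, hq⟩
  have hcpt0 : IsCompact (A 0) :=
    IsCompact.of_isClosed_subset (isCompact_closedBall 0 (R0 + 2)) (hclosed 0) (hsub 0)
  obtain ⟨q, hq⟩ :=
    IsCompact.nonempty_iInter_of_sequence_nonempty_isCompact_isClosed A hanti hnon hcpt0 hclosed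
  have hq' : ∀ i, q ∈ K i := by
    intro i
    have hz : infDist q (K i) = 0 := by
      by_contra hne0
      have hpos : 0 < infDist q (K i) :=
        lt_of_le_of_ne infDist_nonneg (Ne.symm hne0)
      obtain ⟨n, hn⟩ := exists_nat_one_div_lt hpos
      have := (Set.mem_iInter.1 hq n) i
      linarith
    exact ((hcpt i).isClosed.mem_iff_infDist_zero (hne i)).2 hz
  have : q ∈ ⋂ i, K i := Set.mem_iInter.2 hq'
  rw [hempty] at this
  exact this

lemma finset_min {α : Type*} (s : Finset α) (Q : α → ℝ → Prop)
    (hmono : ∀ x θ θ', 0 < θ' → θ' ≤ θ → Q x θ → Q x θ')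
    (h : ∀ x ∈ s, ∃ θ, 0 < θ ∧ Q x θ) : ∃ θ, 0 < θ ∧ ∀ x ∈ s, Q x θ := by
  classical
  induction s using Finset.induction with
  | empty => exact ⟨1, one_pos, by simp⟩
  | @insert x s hx ih =>
      obtain ⟨θ1, hθ1, hQ1⟩ := h x (Finset.mem_insert_self x s)
      obtain ⟨θ2, hθ2, hQ2⟩ := ih fun y hy => h y (Finset.mem_insert_of_mem hy)
      refine ⟨min θ1 θ2, lt_min hθ1 hθ2, ?_⟩
      intro y hy
      rcases Finset.mem_insert.1 hy with rfl | hy'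
      · exact hmono y θ1 _ (lt_min hθ1 hθ2) (min_le_left _ _) hQ1
      · exact hmono y θ2 _ (lt_min hθ1 hθ2) (min_le_right _ _) (hQ2 y hy')

lemma exists_uniform_gap {r : ℕ} (hr : 1 ≤ r) (X' : Finset (Fin d → ℝ)) :
    ∃ Θ : ℝ, 0 < Θ ∧ ∀ T : Fin r → Finset (Fin d → ℝ),
      (∀ i, T i ⊆ X') → (∀ i, (T i).Nonempty) →
      ∀ q : Fin d → ℝ,
        (∀ i, infDist q (convexHull ℝ (↑(T i) : Set (Fin d → ℝ))) ≤ Θ) →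
        (⋂ i, convexHull ℝ (↑(T i) : Set (Fin d → ℝ))).Nonempty := by
  classical
  set 𝒜 : Finset (Fin r → Finset (Fin d → ℝ)) :=
    Fintype.piFinset (fun _ => X'.powerset) with h𝒜
  have key : ∀ T ∈ 𝒜, ∃ θ : ℝ, 0 < θ ∧
      ((∀ i, (T i).Nonempty) →
        ∀ q : Fin d → ℝ,
          (∀ i, infDist q (convexHull ℝ (↑(T i) : Set (Fin d → ℝ))) ≤ θ) →
          (⋂ i, convexHull ℝ (↑(T i) : Set (Fin d → ℝ))).Nonempty) := by
    intro T _
    by_cases hne : ∀ i, (T i).Nonempty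
    · by_cases hint : (⋂ i, convexHull ℝ (↑(T i) : Set (Fin d → ℝ))).Nonempty
      · exact ⟨1, one_pos, fun _ _ _ => hint⟩
      · have hempty : (⋂ i, convexHull ℝ (↑(T i) : Set (Fin d → ℝ))) = ∅ :=
          Set.not_nonempty_iff_eq_empty.1 hint
        obtain ⟨θ, hθ, hgap⟩ := exists_gap (fun i => convexHull ℝ (↑(T i) : Set (Fin d → ℝ))) hr
          (fun i => (Set.toFinite (↑(T i) : Set (Fin d → ℝ))).isCompact_convexHull ℝ)
          (fun i => convexHull_nonempty_iff.2 (Finset.coe_nonempty.2 (hne i)))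
          hempty
        exact ⟨θ, hθ, fun _ q hq => absurd hq (hgap q)⟩
    · exact ⟨1, one_pos, fun h => absurd h hne⟩
  obtain ⟨Θ, hΘ, hall⟩ := finset_min 𝒜 _
    (fun T θ θ' _ hle hQ hne q hq => hQ hne q fun i => le_trans (hq i) hle) key
  refine ⟨Θ, hΘ, ?_⟩
  intro T hTsub hTne q hq
  have hT𝒜 : T ∈ 𝒜 := by
    rw [h𝒜, Fintype.mem_piFinset]
    exact fun i => Finset.mem_powerset.2 (hTsub i)
  exact hall T hT𝒜 hTne q hq


open scoped Classical

variable {d : ℕ}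

/-- Tverberg partition predicate. -/
def IsTP (r : ℕ) (X : Finset (Fin d → ℝ)) (P : Fin r → Set (Fin d → ℝ))
    (p : Fin d → ℝ) : Prop :=
  (⋃ i, P i) = (↑X : Set (Fin d → ℝ)) ∧
  (∀ i i', i ≠ i' → Disjoint (P i) (P i')) ∧
  (∀ i, p ∈ convexHull ℝ (P i))

/-- The inductive invariant. -/
def Good (d r t : ℕ) (a : Fin r → ℕ) : Prop :=
  ∃ (X : Finset (Fin d → ℝ)) (x : Fin r → (Fin d → ℝ)),
    (∀ v ∈ X, ∀ j : Fin d, t ≤ (j : ℕ) → v j = 0) ∧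
    X.card = (t + 1) * (r - 1) + 1 ∧
    (∀ i, x i ∈ X) ∧ Function.Injective x ∧
    ∀ P p, IsTP r X P p →
      ((∀ i j, x i ∈ P j → (P j).ncard = a i) ∧
       (∀ i i' j, x i ∈ P j → x i' ∈ P j → i = i') ∧
       (∀ j, ∀ z ∈ P j, p ∉ convexHull ℝ (P j \ {z})))

section Parts

variable {r : ℕ} {X : Finset (Fin d → ℝ)} {P : Fin r → Set (Fin d → ℝ)}
  {p : Fin d → ℝ}

lemma isTP_subset (h : IsTP r X P p) (j : Fin r) : P j ⊆ (↑X : Set (Fin d → ℝ)) := by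
  rw [← h.1]; exact Set.subset_iUnion P j

lemma coe_filter_part (h : IsTP r X P p) (j : Fin r) :
    (↑(X.filter (· ∈ P j)) : Set (Fin d → ℝ)) = P j := by
  ext z
  simp only [Finset.coe_filter, Set.mem_setOf_eq, Finset.mem_coe]
  exact ⟨fun hz => hz.2, fun hz => ⟨isTP_subset h j hz, hz⟩⟩

lemma part_nonempty (h : IsTP r X P p) (j : Fin r) :
    (X.filter (· ∈ P j)).Nonempty := by
  have := h.2.2 j
  rcases Set.eq_empty_or_nonempty (P j) with he | ⟨z, hz⟩
  · rw [he, convexHull_empty] at this; exact absurd this (Set.notMem_empty p)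
  · exact ⟨z, Finset.mem_filter.2 ⟨isTP_subset h j hz, hz⟩⟩

lemma biUnion_parts (h : IsTP r X P p) :
    Finset.univ.biUnion (fun j => X.filter (· ∈ P j)) = X := by
  ext z
  simp only [Finset.mem_biUnion, Finset.mem_univ, true_and, Finset.mem_filter]
  constructor
  · rintro ⟨j, hj, _⟩; exact hj
  · intro hz
    have : z ∈ ⋃ i, P i := by rw [h.1]; exact hz
    obtain ⟨j, hj⟩ := Set.mem_iUnion.1 this
    exact ⟨j, hz, hj⟩

lemma parts_disjoint (h : IsTP r X P p) {i i' : Fin r} (hne : i ≠ i') :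
    Disjoint (X.filter (· ∈ P i)) (X.filter (· ∈ P i')) := by
  rw [Finset.disjoint_left]
  intro z hz hz'
  exact Set.disjoint_left.1 (h.2.1 i i' hne) (Finset.mem_filter.1 hz).2
    (Finset.mem_filter.1 hz').2

lemma sum_card_parts (h : IsTP r X P p) :
    ∑ j, (X.filter (· ∈ P j)).card = X.card := by
  have hcb := Finset.card_biUnion (s := Finset.univ)
    (t := fun j => X.filter (· ∈ P j)) (fun i _ i' _ hne => parts_disjoint h hne)
  rw [biUnion_parts h] at hcb
  exact hcb.symm

end Parts

/-- helper: terms bounded below summing to the min possible are all equal. -/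
lemma sum_eq_card_forces {ι : Type*} (s : Finset ι) (g : ι → ℕ) (c : ℕ)
    (hge : ∀ x ∈ s, c ≤ g x) (hsum : ∑ x ∈ s, g x = c * s.card) :
    ∀ x ∈ s, g x = c := by
  by_contra hcon
  push_neg at hcon
  obtain ⟨x0, hx0, hne⟩ := hcon
  have h1 : c + 1 ≤ g x0 := lt_of_le_of_ne (hge x0 hx0) (Ne.symm hne)
  have h2 : c * (s.erase x0).card ≤ ∑ x ∈ s.erase x0, g x := by
    calc c * (s.erase x0).card = ∑ _x ∈ s.erase x0, c := by
          rw [Finset.sum_const, smul_eq_mul, mul_comm]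
      _ ≤ ∑ x ∈ s.erase x0, g x :=
          Finset.sum_le_sum fun x hx => hge x (Finset.mem_of_mem_erase hx)
  have h3 : ∑ x ∈ s.erase x0, g x + g x0 = ∑ x ∈ s, g x :=
    Finset.sum_erase_add s g hx0
  have h4 : (s.erase x0).card = s.card - 1 := Finset.card_erase_of_mem hx0
  have h5 : 1 ≤ s.card := Finset.card_pos.2 ⟨x0, hx0⟩
  have hm : s.card = (s.erase x0).card + 1 := by omega
  rw [hm, Nat.mul_succ] at hsum
  set C := c * (s.erase x0).card with hC
  omega


section Base

/-- the base collinear points -/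
def vpt (s : ℕ) : Fin d → ℝ := fun j => if (j : ℕ) = 0 then (s : ℝ) else 0

lemma vpt_inj (hd : 0 < d) : Function.Injective (vpt (d := d)) := by
  intro s s' h
  have := congrFun h ⟨0, hd⟩
  simp only [vpt] at this
  exact_mod_cast this

lemma good_base (r : ℕ) (hr : 1 ≤ r) (hd : 0 < d) (a : Fin r → ℕ)
    (h1 : ∀ i, 1 ≤ a i) (h2 : ∀ i, a i ≤ 2)
    (hs : ∑ i, a i = 2 * (r - 1) + 1) : Good d r 1 a := by
  classical
  set i₀ : Fin d := ⟨0, hd⟩ with hi₀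
  have hvpt0 : ∀ s : ℕ, vpt (d := d) s i₀ = (s : ℝ) := fun s => by simp [vpt, hi₀]
  obtain ⟨k, hak, hak2⟩ : ∃ k : Fin r, a k = 1 ∧ ∀ i, i ≠ k → a i = 2 := by
    have hcount : ∑ i, (a i + if a i = 1 then 1 else 0) = 2 * r := by
      have hterm : ∀ i : Fin r, a i + (if a i = 1 then 1 else 0) = 2 := by
        intro i; have := h1 i; have := h2 i
        by_cases h : a i = 1 <;> simp [h] <;> omega
      rw [Finset.sum_congr rfl fun i _ => hterm i]
      simp [Finset.sum_const, Finset.card_univ, mul_comm]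
    rw [Finset.sum_add_distrib, hs, ← Finset.card_filter] at hcount
    have hcard1 : (Finset.univ.filter (fun i => a i = 1)).card = 1 := by omega
    obtain ⟨k, hk⟩ := Finset.card_eq_one.1 hcard1
    refine ⟨k, ?_, ?_⟩
    · have : k ∈ Finset.univ.filter (fun i => a i = 1) := by rw [hk]; simp
      exact (Finset.mem_filter.1 this).2
    · intro i hik
      have hnotin : i ∉ Finset.univ.filter (fun i => a i = 1) := by
        rw [hk]; simp [hik]
      have hne1 : a i ≠ 1 := fun h =>
        hnotin (Finset.mem_filter.2 ⟨Finset.mem_univ i, h⟩)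
      have := h1 i; have := h2 i; omega
  set n : ℕ := 2 * r - 1 with hn
  set X : Finset (Fin d → ℝ) := (Finset.range n).image (vpt (d := d)) with hX
  have hmemX : ∀ z ∈ X, ∃ s, s < n ∧ vpt (d := d) s = z := by
    intro z hz
    obtain ⟨s, hs1, hs2⟩ := Finset.mem_image.1 hz
    exact ⟨s, Finset.mem_range.1 hs1, hs2⟩
  have hmemX' : ∀ s, s < n → vpt (d := d) s ∈ X := fun s hs =>
    Finset.mem_image.2 ⟨s, Finset.mem_range.2 hs, rfl⟩
  have hcardX : X.card = n := by
    rw [hX, Finset.card_image_of_injective _ (vpt_inj hd), Finset.card_range]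
  set skew : Fin r → ℕ := fun i => if (i : ℕ) < (k : ℕ) then (i : ℕ) else (i : ℕ) - 1
    with hskew
  have hskewlt : ∀ i : Fin r, i ≠ k → skew i < r - 1 := by
    intro i hik
    have hh1 : (i : ℕ) < r := i.isLt
    have hh2 : (k : ℕ) < r := k.isLt
    have hh3 : (i : ℕ) ≠ (k : ℕ) := fun h => hik (Fin.ext h)
    simp only [hskew]
    split <;> omega
  set val : Fin r → ℕ := fun i => if i = k then r - 1 else skew i with hval
  have hvallt : ∀ i, val i < n := by
    intro i
    simp only [hval]
    split
    · omega
    · have := hskewlt i (by assumption); omega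
  have hvalnk : ∀ i, i ≠ k → val i < r - 1 := by
    intro i h
    simp only [hval, if_neg h]
    exact hskewlt i h
  have hvalinj : Function.Injective val := by
    intro i i' he
    have hh1 : (i : ℕ) < r := i.isLt
    have hh2 : (i' : ℕ) < r := i'.isLt
    have hh3 : (k : ℕ) < r := k.isLt
    by_cases h : i = k <;> by_cases h' : i' = k
    · rw [h, h']
    · exfalso
      have h5 := hvalnk i' h'
      have e1 : val i = r - 1 := by simp only [hval, if_pos h]
      omega
    · exfalso
      have h5 := hvalnk i h
      have e1 : val i' = r - 1 := by simp only [hval, if_pos h']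
      omega
    · have h4 : (i : ℕ) ≠ (k : ℕ) := fun hh => h (Fin.ext hh)
      have h5 : (i' : ℕ) ≠ (k : ℕ) := fun hh => h' (Fin.ext hh)
      apply Fin.ext
      simp only [hval, hskew, if_neg h, if_neg h'] at he
      split_ifs at he <;> omega
  set x : Fin r → (Fin d → ℝ) := fun i => vpt (d := d) (val i) with hxdef
  have hxinj : Function.Injective x := fun i i' h => hvalinj (vpt_inj hd h)
  refine ⟨X, x, ?_, ?_, ?_, hxinj, ?_⟩
  · intro v hv j hj
    obtain ⟨s, _, rfl⟩ := hmemX v hv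
    have : (j : ℕ) ≠ 0 := by omega
    simp [vpt, this]
  · rw [hcardX]; omega
  · intro i
    exact hmemX' _ (hvallt i)
  -- main analysis
  intro P p hTP
  set Q : Fin r → Finset (Fin d → ℝ) := fun j => X.filter (· ∈ P j) with hQ
  have hQcoe : ∀ j, (↑(Q j) : Set (Fin d → ℝ)) = P j := fun j => coe_filter_part hTP j
  have hQne : ∀ j, (Q j).Nonempty := fun j => part_nonempty hTP j
  have hQsum : ∑ j, (Q j).card = n := by
    have := sum_card_parts hTP
    rw [hcardX] at this
    exact this
  have hQmem : ∀ j z, z ∈ Q j ↔ (z ∈ X ∧ z ∈ P j) := by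
    intro j z; simp only [hQ, Finset.mem_filter]
  have hQdisj : ∀ j j', j ≠ j' → ∀ z, z ∈ Q j → z ∈ Q j' → False := by
    intro j j' hne z hz hz'
    exact Set.disjoint_left.1 (hTP.2.1 j j' hne) ((hQmem j z).1 hz).2 ((hQmem j' z).1 hz').2
  have hmem_hull : ∀ j, p ∈ convexHull ℝ (↑(Q j) : Set (Fin d → ℝ)) := by
    intro j; rw [hQcoe]; exact hTP.2.2 j
  have hsing : ∀ j u, Q j = {u} → p = u := by
    intro j u hQj
    have hh := hmem_hull j
    rw [hQj] at hh
    simpa [convexHull_singleton] using hh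
  have huniq : ∀ j j', (Q j).card = 1 → (Q j').card = 1 → j = j' := by
    intro j j' hc hc'
    obtain ⟨u, hu⟩ := Finset.card_eq_one.1 hc
    obtain ⟨u', hu'⟩ := Finset.card_eq_one.1 hc'
    by_contra hne
    apply hQdisj j j' hne p
    · rw [hu, hsing j u hu]; simp
    · rw [hu', hsing j' u' hu']; simp
  obtain ⟨j0, hj0⟩ : ∃ j0, (Q j0).card = 1 := by
    by_contra hcon
    push_neg at hcon
    have hge : ∀ j : Fin r, j ∈ Finset.univ → 2 ≤ (Q j).card := by
      intro j _
      have := (hQne j).card_pos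
      have := hcon j
      omega
    have : 2 * r ≤ ∑ j, (Q j).card := by
      calc 2 * r = ∑ _j : Fin r, 2 := by
            simp [Finset.sum_const, Finset.card_univ, mul_comm]
        _ ≤ _ := Finset.sum_le_sum hge
    omega
  have hpairs : ∀ j, j ≠ j0 → (Q j).card = 2 := by
    have hsum' : ∑ j ∈ Finset.univ.erase j0, (Q j).card
        = 2 * (Finset.univ.erase j0).card := by
      have hadd : ∑ j ∈ Finset.univ.erase j0, (Q j).card + (Q j0).card
          = ∑ j, (Q j).card :=
        Finset.sum_erase_add Finset.univ (fun j => (Q j).card) (Finset.mem_univ j0)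
      have hce : (Finset.univ.erase j0).card = r - 1 := by
        rw [Finset.card_erase_of_mem (Finset.mem_univ j0), Finset.card_univ,
          Fintype.card_fin]
      rw [hce]
      omega
    intro j hj
    refine sum_eq_card_forces _ _ 2 ?_ hsum' j (Finset.mem_erase.2 ⟨hj, Finset.mem_univ j⟩)
    intro y hy
    have hyne : y ≠ j0 := Finset.ne_of_mem_erase hy
    have := (hQne y).card_pos
    have : (Q y).card ≠ 1 := fun h => hyne (huniq y j0 h hj0)
    omega
  obtain ⟨m, hm⟩ := Finset.card_eq_one.1 hj0
  have hpm : p = m := hsing j0 m hm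
  have hmQ : m ∈ Q j0 := by rw [hm]; simp
  have hmX : m ∈ X := ((hQmem j0 m).1 hmQ).1
  obtain ⟨s0, hs0n, hs0⟩ := hmemX m hmX
  have hstraddle : ∀ j, j ≠ j0 → ∃ u v su sv, Q j = {u, v} ∧ u ≠ v ∧
      vpt (d:=d) su = u ∧ vpt (d:=d) sv = v ∧ su < s0 ∧ s0 < sv ∧ su < n ∧ sv < n := by
    intro j hj
    obtain ⟨u, v, huv, hQj⟩ := Finset.card_eq_two.1 (hpairs j hj)
    have huQ : u ∈ Q j := by rw [hQj]; simp
    have hvQ : v ∈ Q j := by rw [hQj]; simp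
    obtain ⟨su, hsun, hsu⟩ := hmemX u ((hQmem j u).1 huQ).1
    obtain ⟨sv, hsvn, hsv⟩ := hmemX v ((hQmem j v).1 hvQ).1
    have hune : su ≠ s0 := by
      intro h; subst h
      have : u = m := by rw [← hsu, ← hs0]
      exact hQdisj j j0 hj u huQ (this ▸ hmQ)
    have hvne : sv ≠ s0 := by
      intro h; subst h
      have : v = m := by rw [← hsv, ← hs0]
      exact hQdisj j j0 hj v hvQ (this ▸ hmQ)
    obtain ⟨w, hw0, hw1, hwp⟩ := (mem_hull_iff (Q j) p).1 (hmem_hull j)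
    rw [hQj] at hw0 hw1 hwp
    rw [Finset.sum_pair huv] at hw1 hwp
    have hwu : 0 ≤ w u := hw0 u (by simp)
    have hwv : 0 ≤ w v := hw0 v (by simp)
    have heval : w u * (su:ℝ) + w v * (sv:ℝ) = (s0:ℝ) := by
      have hcf := congrFun hwp i₀
      simp only [Pi.add_apply, Pi.smul_apply, smul_eq_mul] at hcf
      have hu0 : u i₀ = (su:ℝ) := by rw [← hsu, hvpt0]
      have hv0 : v i₀ = (sv:ℝ) := by rw [← hsv, hvpt0]
      have hp0 : p i₀ = (s0:ℝ) := by rw [hpm, ← hs0, hvpt0]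
      rw [hu0, hv0, hp0] at hcf
      exact hcf
    have hboth : ∀ (wa wb : ℝ) (sa sb : ℕ),
        0 ≤ wa → 0 ≤ wb → wa + wb = 1 → wa * (sa:ℝ) + wb * (sb:ℝ) = (s0:ℝ) →
        sa < s0 → sb < s0 → False := by
      intro wa wb sa sb hwa hwb hsum1 hev ha hb
      have t1 : wa * (sa:ℝ) ≤ wa * (s0:ℝ) :=
        mul_le_mul_of_nonneg_left (by exact_mod_cast ha.le) hwa
      have t2 : wb * (sb:ℝ) ≤ wb * (s0:ℝ) :=
        mul_le_mul_of_nonneg_left (by exact_mod_cast hb.le) hwb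
      have t3 : wa * (s0:ℝ) + wb * (s0:ℝ) = (s0:ℝ) := by
        have := add_mul wa wb (s0:ℝ)
        rw [hsum1, one_mul] at this
        linarith
      -- equality forces both to be tight
      have e1 : wa * (sa:ℝ) = wa * (s0:ℝ) := by linarith
      have e2 : wb * (sb:ℝ) = wb * (s0:ℝ) := by linarith
      have hwa0 : wa = 0 := by
        by_contra hwa0
        have : 0 < wa := lt_of_le_of_ne hwa (Ne.symm hwa0)
        have hcc : (sa:ℝ) = (s0:ℝ) := mul_left_cancel₀ hwa0 e1
        have : sa = s0 := by exact_mod_cast hcc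
        omega
      have hwb0 : wb = 0 := by
        by_contra hwb0
        have : 0 < wb := lt_of_le_of_ne hwb (Ne.symm hwb0)
        have hcc : (sb:ℝ) = (s0:ℝ) := mul_left_cancel₀ hwb0 e2
        have : sb = s0 := by exact_mod_cast hcc
        omega
      rw [hwa0, hwb0] at hsum1
      norm_num at hsum1
    rcases lt_trichotomy su s0 with hu_lt | hu_eq | hu_gt
    · rcases lt_trichotomy sv s0 with hv_lt | hv_eq | hv_gt
      · exact (hboth (w u) (w v) su sv hwu hwv hw1 heval hu_lt hv_lt).elim
      · exact absurd hv_eq hvne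
      · exact ⟨u, v, su, sv, hQj, huv, hsu, hsv, hu_lt, hv_gt, hsun, hsvn⟩
    · exact absurd hu_eq hune
    · rcases lt_trichotomy sv s0 with hv_lt | hv_eq | hv_gt
      · exact ⟨v, u, sv, su, by rw [hQj, Finset.pair_comm], huv.symm, hsv, hsu,
          hv_lt, hu_gt, hsvn, hsun⟩
      · exact absurd hv_eq hvne
      · exfalso
        -- both greater: symmetric argument with upper bound
        have t1 : w u * (s0:ℝ) ≤ w u * (su:ℝ) :=
          mul_le_mul_of_nonneg_left (by exact_mod_cast hu_gt.le) hwu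
        have t2 : w v * (s0:ℝ) ≤ w v * (sv:ℝ) :=
          mul_le_mul_of_nonneg_left (by exact_mod_cast hv_gt.le) hwv
        have t3 : w u * (s0:ℝ) + w v * (s0:ℝ) = (s0:ℝ) := by
          have := add_mul (w u) (w v) (s0:ℝ)
          rw [hw1, one_mul] at this
          linarith
        have e1 : w u * (s0:ℝ) = w u * (su:ℝ) := by linarith
        have hwu0 : w u = 0 := by
          by_contra hwu0
          have hlt : w u * (s0:ℝ) < w u * (su:ℝ) :=
            mul_lt_mul_of_pos_left (by exact_mod_cast hu_gt)
              (lt_of_le_of_ne hwu (Ne.symm hwu0))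
          linarith
        have hwv0 : w v = 0 := by
          have e2 : w v * (s0:ℝ) = w v * (sv:ℝ) := by linarith
          by_contra hwv0
          have hlt : w v * (s0:ℝ) < w v * (sv:ℝ) :=
            mul_lt_mul_of_pos_left (by exact_mod_cast hv_gt)
              (lt_of_le_of_ne hwv (Ne.symm hwv0))
          linarith
        rw [hwu0, hwv0] at hw1
        norm_num at hw1
  -- median identification
  have hs0val : s0 = r - 1 := by
    have hLXcard : (X.filter (fun z => z i₀ < (s0 : ℝ))).card = s0 := by
      have himg : X.filter (fun z => z i₀ < (s0 : ℝ))
          = (Finset.range s0).image (vpt (d:=d)) := by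
        ext z
        simp only [Finset.mem_filter, Finset.mem_image, Finset.mem_range]
        constructor
        · rintro ⟨hzX, hzlt⟩
          obtain ⟨s, hsn, rfl⟩ := hmemX z hzX
          rw [hvpt0] at hzlt
          exact ⟨s, by exact_mod_cast hzlt, rfl⟩
        · rintro ⟨s, hss0, rfl⟩
          refine ⟨hmemX' s (by omega), ?_⟩
          rw [hvpt0]; exact_mod_cast hss0
      rw [himg, Finset.card_image_of_injective _ (vpt_inj hd), Finset.card_range]
    have hbi : X.filter (fun z => z i₀ < (s0 : ℝ))
        = Finset.univ.biUnion (fun j => (Q j).filter (fun z => z i₀ < (s0:ℝ))) := by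
      ext z
      simp only [Finset.mem_biUnion, Finset.mem_univ, true_and, Finset.mem_filter]
      constructor
      · rintro ⟨hzX, hzlt⟩
        have hz2 : z ∈ Finset.univ.biUnion (fun j => X.filter (· ∈ P j)) := by
          rw [biUnion_parts hTP]; exact hzX
        obtain ⟨j, _, hj⟩ := Finset.mem_biUnion.1 hz2
        exact ⟨j, ⟨hj, hzlt⟩⟩
      · rintro ⟨j, ⟨hzq, hzlt⟩⟩
        exact ⟨((hQmem j z).1 hzq).1, hzlt⟩
    have hcnt : ∀ j, ((Q j).filter (fun z => z i₀ < (s0:ℝ))).card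
        = if j = j0 then 0 else 1 := by
      intro j
      by_cases hj : j = j0
      · subst hj
        rw [if_pos rfl, Finset.card_eq_zero]
        rw [hm]
        ext z
        simp only [Finset.mem_filter, Finset.mem_singleton, Finset.notMem_empty,
          iff_false, not_and]
        rintro rfl
        rw [← hs0, hvpt0]
        exact lt_irrefl _
      · rw [if_neg hj]
        obtain ⟨u, v, su, sv, hQj, huv, hsu, hsv, hsu_lt, hsv_gt, _, _⟩ := hstraddle j hj
        rw [hQj]
        have : ({u, v} : Finset (Fin d → ℝ)).filter (fun z => z i₀ < (s0:ℝ)) = {u} := by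
          ext z
          simp only [Finset.mem_filter, Finset.mem_insert, Finset.mem_singleton]
          constructor
          · rintro ⟨rfl | rfl, hlt⟩
            · rfl
            · exfalso
              rw [← hsv, hvpt0] at hlt
              have hltn : sv < s0 := by exact_mod_cast hlt
              exact Nat.lt_asymm hsv_gt hltn
          · rintro rfl
            refine ⟨Or.inl rfl, ?_⟩
            rw [← hsu, hvpt0]
            exact_mod_cast hsu_lt
        rw [this, Finset.card_singleton]
    have hsumcnt : ∑ j, ((Q j).filter (fun z => z i₀ < (s0:ℝ))).card = r - 1 := by
      rw [Finset.sum_congr rfl fun j _ => hcnt j]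
      have hadd : ∑ j ∈ Finset.univ.erase j0, (if j = j0 then 0 else (1:ℕ))
          + (if j0 = j0 then 0 else (1:ℕ)) = ∑ j, (if j = j0 then 0 else (1:ℕ)) :=
        Finset.sum_erase_add Finset.univ
          (fun j => if j = j0 then 0 else (1:ℕ)) (Finset.mem_univ j0)
      have hz : (if j0 = j0 then 0 else (1:ℕ)) = 0 := if_pos rfl
      have herase : ∑ j ∈ Finset.univ.erase j0, (if j = j0 then 0 else (1:ℕ))
          = (Finset.univ.erase j0).card := by
        rw [Finset.sum_congr rfl fun j hj => if_neg (Finset.ne_of_mem_erase hj)]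
        simp
      have hce : (Finset.univ.erase j0).card = r - 1 := by
        rw [Finset.card_erase_of_mem (Finset.mem_univ j0), Finset.card_univ,
          Fintype.card_fin]
      rw [← hadd, hz, herase, hce]
      exact Nat.add_zero _
    have hcd : (X.filter (fun z => z i₀ < (s0 : ℝ))).card
        = ∑ j, ((Q j).filter (fun z => z i₀ < (s0:ℝ))).card := by
      rw [hbi]
      apply Finset.card_biUnion
      intro j _ j' _ hne
      rw [Function.onFun_apply, Finset.disjoint_left]
      intro z hz hz'
      exact hQdisj j j' hne z (Finset.mem_filter.1 hz).1 (Finset.mem_filter.1 hz').1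
    rw [← hLXcard, hcd, hsumcnt]
  -- m = x k
  have hmxk : m = x k := by
    show m = vpt (val k)
    have : val k = r - 1 := by simp only [hval, if_pos rfl]
    rw [this, ← hs0, hs0val]
  have hxki : ∀ i, i ≠ k → (x i) i₀ < (s0 : ℝ) := by
    intro i h
    show vpt (val i) i₀ < (s0 : ℝ)
    rw [hvpt0]
    have := hvalnk i h
    have : val i < s0 := by omega
    exact_mod_cast this
  have hximem : ∀ i, x i ∈ X := fun i => hmemX' _ (hvallt i)
  -- part of x i determination
  have hpart : ∀ i j, x i ∈ P j → (i = k ∧ j = j0) ∨ (i ≠ k ∧ j ≠ j0) := by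
    intro i j hxi
    have hxiQ : x i ∈ Q j := (hQmem j (x i)).2 ⟨hximem i, hxi⟩
    by_cases hik : i = k
    · left
      refine ⟨hik, ?_⟩
      by_contra hj
      subst hik
      rw [← hmxk] at hxiQ
      exact hQdisj j j0 hj m hxiQ hmQ
    · right
      refine ⟨hik, ?_⟩
      intro hj
      subst hj
      rw [hm, Finset.mem_singleton] at hxiQ
      have : (x i) i₀ < (s0:ℝ) := hxki i hik
      rw [hxiQ, ← hs0, hvpt0] at this
      exact lt_irrefl _ this
  refine ⟨?_, ?_, ?_⟩
  · -- sizes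
    intro i j hxi
    have hnc : (P j).ncard = (Q j).card := by rw [← hQcoe j, Set.ncard_coe_finset]
    rcases hpart i j hxi with ⟨hik, hjj0⟩ | ⟨hik, hjj0⟩
    · rw [hnc, hjj0, hj0, hik, hak]
    · rw [hnc, hpairs j hjj0, hak2 i hik]
  · -- distinct parts
    intro i i' j hxi hxi'
    rcases hpart i j hxi with ⟨hik, hjj0⟩ | ⟨hik, hjj0⟩
    · rcases hpart i' j hxi' with ⟨hik', _⟩ | ⟨hik', hjj0'⟩
      · rw [hik, hik']
      · exact absurd hjj0 hjj0'
    · rcases hpart i' j hxi' with ⟨_, hjj0'⟩ | ⟨hik', _⟩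
      · exact absurd hjj0' hjj0
      · -- both are left points in a pair part: the left-filter has card ≤ 1
        obtain ⟨u, v, su, sv, hQj, huv, hsu, hsv, hsu_lt, hsv_gt, _, _⟩ :=
          hstraddle j hjj0
        have hxiu : x i = u := by
          have hxiQ : x i ∈ Q j := (hQmem j (x i)).2 ⟨hximem i, hxi⟩
          rw [hQj, Finset.mem_insert, Finset.mem_singleton] at hxiQ
          rcases hxiQ with h | h
          · exact h
          · exfalso
            have hxx := hxki i hik
            rw [h, ← hsv, hvpt0] at hxx
            have hltn : sv < s0 := by exact_mod_cast hxx
            exact Nat.lt_asymm hsv_gt hltn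
        have hxiu' : x i' = u := by
          have hxiQ : x i' ∈ Q j := (hQmem j (x i')).2 ⟨hximem i', hxi'⟩
          rw [hQj, Finset.mem_insert, Finset.mem_singleton] at hxiQ
          rcases hxiQ with h | h
          · exact h
          · exfalso
            have hxx := hxki i' hik'
            rw [h, ← hsv, hvpt0] at hxx
            have hltn : sv < s0 := by exact_mod_cast hxx
            exact Nat.lt_asymm hsv_gt hltn
        exact hxinj (by rw [hxiu, hxiu'])
  · -- minimality
    intro j z hz hcontra
    have hzQ : z ∈ Q j := (hQmem j z).2 ⟨by
      have := isTP_subset hTP j hz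
      exact_mod_cast this, hz⟩
    rw [← hQcoe j, ← Finset.coe_erase] at hcontra
    by_cases hj : j = j0
    · subst hj
      have : z = m := by rw [hm, Finset.mem_singleton] at hzQ; exact hzQ
      subst this
      rw [hm] at hcontra
      simp only [Finset.erase_singleton, Finset.coe_empty, convexHull_empty] at hcontra
      exact hcontra
    · obtain ⟨u, v, su, sv, hQj, huv, hsu, hsv, hsu_lt, hsv_gt, _, _⟩ := hstraddle j hj
      rw [hQj] at hzQ hcontra
      rw [Finset.mem_insert, Finset.mem_singleton] at hzQ
      have hother : ∃ ot st, ({u,v} : Finset (Fin d → ℝ)).erase z = {ot} ∧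
          vpt (d:=d) st = ot ∧ st ≠ s0 ∧ ot ∈ Q j := by
        rcases hzQ with rfl | rfl
        · refine ⟨v, sv, ?_, hsv, Ne.symm (Nat.ne_of_lt hsv_gt), by rw [hQj]; simp⟩
          rw [Finset.erase_insert (by simpa using huv)]
        · refine ⟨u, su, ?_, hsu, Nat.ne_of_lt hsu_lt, by rw [hQj]; simp⟩
          rw [Finset.pair_comm, Finset.erase_insert (by simpa using huv.symm)]
      obtain ⟨ot, st, hot, hst, hstne, hotQ⟩ := hother
      rw [hot] at hcontra
      simp only [Finset.coe_singleton, convexHull_singleton, Set.mem_singleton_iff]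
        at hcontra
      -- p = ot, but p = m and ot ≠ m
      rw [hpm] at hcontra
      have : st = s0 := by
        have := congrFun hcontra i₀
        rw [← hs0, ← hst, hvpt0, hvpt0] at this
        exact_mod_cast this.symm
      exact hstne this

end Base

section Step

lemma choose_k (r t : ℕ) (hr : 1 ≤ r) (a : Fin r → ℕ)
    (h1 : ∀ i, 1 ≤ a i) (h2 : ∀ i, a i ≤ t + 2)
    (hs : ∑ i, a i = (t + 2) * (r - 1) + 1) :
    ∃ k : Fin r, a k ≤ t + 1 ∧ ∀ i, i ≠ k → 2 ≤ a i := by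
  classical
  by_cases hone : ∃ i, a i = 1
  · obtain ⟨k, hk⟩ := hone
    refine ⟨k, by omega, ?_⟩
    intro i hik
    by_contra hcon
    have hai : a i = 1 := by have := h1 i; omega
    have hmem_i : i ∈ Finset.univ.erase k := Finset.mem_erase.2 ⟨hik, Finset.mem_univ i⟩
    have hc1 : (Finset.univ.erase k).card = r - 1 := by
      rw [Finset.card_erase_of_mem (Finset.mem_univ k), Finset.card_univ, Fintype.card_fin]
    have hc2 : ((Finset.univ.erase k).erase i).card = r - 2 := by
      rw [Finset.card_erase_of_mem hmem_i, hc1]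
      omega
    have hbound : ∑ j ∈ (Finset.univ.erase k).erase i, a j ≤ (t + 2) * (r - 2) := by
      calc ∑ j ∈ (Finset.univ.erase k).erase i, a j
          ≤ ∑ _j ∈ (Finset.univ.erase k).erase i, (t + 2) :=
            Finset.sum_le_sum (fun j _ => h2 j)
        _ = (t + 2) * (r - 2) := by
            rw [Finset.sum_const, hc2, smul_eq_mul, mul_comm]
    have hsplit1 : ∑ j ∈ (Finset.univ.erase k).erase i, a j + a i
        = ∑ j ∈ Finset.univ.erase k, a j :=
      Finset.sum_erase_add _ _ hmem_i
    have hsplit2 : ∑ j ∈ Finset.univ.erase k, a j + a k = ∑ j, a j :=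
      Finset.sum_erase_add _ _ (Finset.mem_univ k)
    have hr2 : 2 ≤ r := by
      by_contra hr2
      have e1 : (i : ℕ) < r := i.isLt
      have e2 : (k : ℕ) < r := k.isLt
      exact hik (Fin.ext (by omega))
    have hmul : (t + 2) * (r - 1) = (t + 2) * (r - 2) + (t + 2) := by
      have hre : r - 1 = (r - 2) + 1 := by omega
      rw [hre, Nat.mul_succ]
    set A1 := (t + 2) * (r - 1) with hA1
    set A2 := (t + 2) * (r - 2) with hA2
    omega
  · push_neg at hone
    have hall2 : ∀ i, 2 ≤ a i := by
      intro i; have := h1 i; have := hone i; omega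
    have hex : ∃ k : Fin r, a k ≤ t + 1 := by
      by_contra hcon
      push_neg at hcon
      have hall : ∀ i : Fin r, a i = t + 2 := by
        intro i; have := h2 i; have := hcon i; omega
      have hsum2 : ∑ i, a i = (t + 2) * r := by
        rw [Finset.sum_congr rfl fun i _ => hall i]
        rw [Finset.sum_const, Finset.card_univ, Fintype.card_fin, smul_eq_mul, mul_comm]
      have hmul : (t + 2) * r = (t + 2) * (r - 1) + (t + 2) := by
        have hre : r = (r - 1) + 1 := by omega
        conv_lhs => rw [hre]
        rw [Nat.mul_succ]
      set A1 := (t + 2) * (r - 1) with hA1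
      set A2 := (t + 2) * r with hA2
      omega
    obtain ⟨k, hk⟩ := hex
    exact ⟨k, hk, fun i _ => hall2 i⟩

lemma good_step (r t : ℕ) (hr : 1 ≤ r) (htd : t < d) (a : Fin r → ℕ)
    (h1 : ∀ i, 1 ≤ a i) (h2 : ∀ i, a i ≤ t + 2)
    (hs : ∑ i, a i = (t + 2) * (r - 1) + 1)
    (IH : ∀ a' : Fin r → ℕ, (∀ i, 1 ≤ a' i) → (∀ i, a' i ≤ t + 1) →
      (∑ i, a' i = (t + 1) * (r - 1) + 1) → Good d r t a') :
    Good d r (t + 1) a := by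
  classical
  obtain ⟨k, hk1, hk2⟩ := choose_k r t hr a h1 h2 hs
  set a' : Fin r → ℕ := fun i => if i = k then a i else a i - 1 with ha'
  have ha'k : a' k = a k := by simp [ha']
  have ha'1 : ∀ i, 1 ≤ a' i := by
    intro i
    rcases eq_or_ne i k with rfl | h
    · rw [ha'k]; exact h1 i
    · have := hk2 i h
      simp only [ha', if_neg h]
      omega
  have ha'2 : ∀ i, a' i ≤ t + 1 := by
    intro i
    rcases eq_or_ne i k with rfl | h
    · rw [ha'k]; exact hk1
    · have := h2 i
      simp only [ha', if_neg h]
      omega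
  have hterm : ∀ i, a' i + (if i = k then 0 else 1) = a i := by
    intro i
    rcases eq_or_ne i k with rfl | h
    · simp [ha'k]
    · have := hk2 i h
      simp only [ha', if_neg h]
      omega
  have hsum_ind : ∑ i, (if i = k then 0 else (1:ℕ)) = r - 1 := by
    have hadd : ∑ i ∈ Finset.univ.erase k, (if i = k then 0 else (1:ℕ))
        + (if k = k then 0 else (1:ℕ)) = ∑ i, (if i = k then 0 else (1:ℕ)) :=
      Finset.sum_erase_add _ _ (Finset.mem_univ k)
    have he : ∑ i ∈ Finset.univ.erase k, (if i = k then 0 else (1:ℕ))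
        = (Finset.univ.erase k).card := by
      rw [Finset.sum_congr rfl fun i hi => if_neg (Finset.ne_of_mem_erase hi)]
      simp
    have hce : (Finset.univ.erase k).card = r - 1 := by
      rw [Finset.card_erase_of_mem (Finset.mem_univ k), Finset.card_univ, Fintype.card_fin]
    have hzz : (if k = k then 0 else (1:ℕ)) = 0 := if_pos rfl
    omega
  have ha's : ∑ i, a' i = (t + 1) * (r - 1) + 1 := by
    have h0 : ∑ i, (a' i + (if i = k then 0 else 1)) = ∑ i, a i :=
      Finset.sum_congr rfl fun i _ => hterm i
    rw [Finset.sum_add_distrib, hsum_ind] at h0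
    have hmul : (t + 2) * (r - 1) = (t + 1) * (r - 1) + (r - 1) := by ring
    set A1 := (t + 1) * (r - 1) with hA1
    set A2 := (t + 2) * (r - 1) with hA2
    omega
  obtain ⟨X', x', hflat', hcard', hx'mem, hx'inj, hmain'⟩ := IH a' ha'1 ha'2 ha's
  have hX'ne : X'.Nonempty := Finset.card_pos.1 (by rw [hcard']; exact Nat.succ_pos _)
  set B : ℝ := X'.sup' hX'ne (fun v => ‖v‖) + 1 with hB
  have hBmem : ∀ v ∈ X', ‖v‖ ≤ B := by
    intro v hv
    have := Finset.le_sup' (fun v => ‖v‖) hv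
    simp only [hB]
    linarith
  have hBpos : 0 < B := by
    obtain ⟨v, hv⟩ := hX'ne
    have h0 : (0:ℝ) ≤ ‖v‖ := norm_nonneg v
    have := Finset.le_sup' (fun v => ‖v‖) hv
    simp only [hB]
    linarith
  have hhull_bound : ∀ (A : Finset (Fin d → ℝ)), A ⊆ X' →
      ∀ u ∈ convexHull ℝ (↑A : Set (Fin d → ℝ)), ‖u‖ ≤ B := by
    intro A hA u hu
    have hsub : (↑A : Set (Fin d → ℝ)) ⊆ Metric.closedBall 0 B := fun v hv =>
      mem_closedBall_zero_iff.2 (hBmem v (hA hv))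
    exact mem_closedBall_zero_iff.1 (convexHull_min hsub (convex_closedBall 0 B) hu)
  obtain ⟨Θ, hΘpos, hsep⟩ := exists_uniform_gap (d := d) hr X'
  set δ : ℝ := min (1/2) (Θ / (B + 1)) with hδ
  have hδpos : 0 < δ := lt_min (by norm_num) (div_pos hΘpos (by linarith))
  have hδhalf : δ ≤ 1/2 := min_le_left _ _
  have hδ1 : δ < 1 := by linarith
  have hδB : δ * B ≤ Θ := by
    have hd1 : δ ≤ Θ / (B + 1) := min_le_right _ _
    have hd2 : δ * B ≤ (Θ / (B + 1)) * B := mul_le_mul_of_nonneg_right hd1 hBpos.le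
    have hd3 : (Θ / (B + 1)) * B ≤ Θ := by
      rw [div_mul_eq_mul_div, div_le_iff₀ (by linarith : (0:ℝ) < B + 1)]
      nlinarith
    exact le_trans hd2 hd3
  set tF : Fin d := ⟨t, htd⟩ with htFdef
  have htF : (tF : ℕ) = t := rfl
  set et : Fin d → ℝ := fun j => if j = tF then (1:ℝ) else 0 with het
  have het_t : et tF = 1 := by simp [het]
  have het_o : ∀ j, j ≠ tF → et j = 0 := by intro j hj; simp [het, hj]
  set c : (Fin d → ℝ) → ℝ := fun v => if v = x' k then δ else 0 with hc
  have hc_nonneg : ∀ v, 0 ≤ c v := by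
    intro v
    rcases eq_or_ne v (x' k) with rfl | h
    · simp only [hc, if_pos rfl]; exact hδpos.le
    · simp [hc, h]
  have hc_le : ∀ v, c v ≤ δ := by
    intro v
    rcases eq_or_ne v (x' k) with rfl | h
    · simp [hc]
    · simp only [hc, if_neg h]; exact hδpos.le
  set L : (Fin d → ℝ) → (Fin d → ℝ) := fun v => v + (c v) • et with hLdef
  set ypt : ℕ → (Fin d → ℝ) := fun mm => (mm : ℝ) • et with hyptdef
  have hvtF : ∀ v ∈ X', v tF = 0 := by
    intro v hv
    exact hflat' v hv tF (le_of_eq htF.symm)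
  have hLtF : ∀ v ∈ X', (L v) tF = c v := by
    intro v hv
    show (v + (c v) • et) tF = c v
    rw [Pi.add_apply, Pi.smul_apply, smul_eq_mul, hvtF v hv, het_t, zero_add, mul_one]
  have hLo : ∀ v (j : Fin d), j ≠ tF → (L v) j = v j := by
    intro v j hj
    show (v + (c v) • et) j = v j
    rw [Pi.add_apply, Pi.smul_apply, smul_eq_mul, het_o j hj, mul_zero, add_zero]
  have hyptF : ∀ mm : ℕ, (ypt mm) tF = (mm : ℝ) := by
    intro mm
    show ((mm : ℝ) • et) tF = (mm : ℝ)
    rw [Pi.smul_apply, smul_eq_mul, het_t, mul_one]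
  have hypto : ∀ (mm : ℕ) (j : Fin d), j ≠ tF → (ypt mm) j = 0 := by
    intro mm j hj
    show ((mm : ℝ) • et) j = 0
    rw [Pi.smul_apply, smul_eq_mul, het_o j hj, mul_zero]
  have hLinj : Set.InjOn L (↑X' : Set (Fin d → ℝ)) := by
    intro v hv v' hv' he
    funext j
    rcases eq_or_ne j tF with rfl | hj
    · rw [hvtF v (Finset.mem_coe.1 hv), hvtF v' (Finset.mem_coe.1 hv')]
    · have := congrFun he j
      rwa [hLo v j hj, hLo v' j hj] at this
  set Xg : Finset (Fin d → ℝ) := X'.image L with hXg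
  set Yg : Finset (Fin d → ℝ) := (Finset.Icc 1 (r-1)).image ypt with hYg
  set XX : Finset (Fin d → ℝ) := Xg ∪ Yg with hXXdef
  have hyinj : Set.InjOn ypt (↑(Finset.Icc 1 (r-1)) : Set ℕ) := by
    intro mm hmm mm' hmm' he
    have := congrFun he tF
    rw [hyptF, hyptF] at this
    exact_mod_cast this
  have hXgYg : Disjoint Xg Yg := by
    rw [Finset.disjoint_left]
    intro z hz hz'
    obtain ⟨v, hv, rfl⟩ := Finset.mem_image.1 hz
    obtain ⟨mm, hmm, hLv⟩ := Finset.mem_image.1 hz'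
    have h1' : (L v) tF = c v := hLtF v hv
    have h2' : (L v) tF = (mm : ℝ) := by rw [← hLv]; exact hyptF mm
    have hmm1 : 1 ≤ mm := (Finset.mem_Icc.1 hmm).1
    have hmm1' : (1:ℝ) ≤ (mm:ℝ) := by exact_mod_cast hmm1
    have := hc_le v
    rw [h1'] at h2'
    linarith
  have hXXcard : XX.card = (t + 1 + 1) * (r - 1) + 1 := by
    rw [hXXdef, Finset.card_union_of_disjoint hXgYg, hXg, hYg,
      Finset.card_image_of_injOn hLinj, Finset.card_image_of_injOn hyinj,
      hcard', Nat.card_Icc]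
    have hmul : (t + 1 + 1) * (r - 1) = (t + 1) * (r - 1) + (r - 1) := by ring
    set A1 := (t + 1) * (r - 1) with hA1
    set A2 := (t + 1 + 1) * (r - 1) with hA2
    omega
  set xx : Fin r → (Fin d → ℝ) := fun i => L (x' i) with hxx
  have hxxmem : ∀ i, xx i ∈ XX := by
    intro i
    exact Finset.mem_union_left _ (Finset.mem_image_of_mem L (hx'mem i))
  have hxxinj : Function.Injective xx := by
    intro i i' he
    exact hx'inj (hLinj (Finset.mem_coe.2 (hx'mem i)) (Finset.mem_coe.2 (hx'mem i')) he)
  refine ⟨XX, xx, ?_, hXXcard, hxxmem, hxxinj, ?_⟩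
  · intro v hv j hj
    have hjne : j ≠ tF := by
      intro hh
      rw [hh, htF] at hj
      omega
    rcases Finset.mem_union.1 hv with hv' | hv'
    · obtain ⟨v0, hv0, rfl⟩ := Finset.mem_image.1 hv'
      rw [hLo v0 j hjne]
      exact hflat' v0 hv0 j (by omega)
    · obtain ⟨mm, hmm, rfl⟩ := Finset.mem_image.1 hv'
      exact hypto mm j hjne
  -- main analysis
  intro P p hTP
  set S : Fin r → Finset (Fin d → ℝ) := fun j => X'.filter (fun v => L v ∈ P j) with hSdef
  set Y : Fin r → Finset ℕ :=
    fun j => (Finset.Icc 1 (r-1)).filter (fun mm => ypt mm ∈ P j) with hYdef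
  have hSsub : ∀ j, S j ⊆ X' := fun j => Finset.filter_subset _ _
  have hYsub : ∀ j, Y j ⊆ Finset.Icc 1 (r-1) := fun j => Finset.filter_subset _ _
  have hSmem : ∀ j v, v ∈ S j ↔ v ∈ X' ∧ L v ∈ P j := by
    intro j v
    simp only [hSdef, Finset.mem_filter]
  have hYmem : ∀ j mm, mm ∈ Y j ↔ mm ∈ Finset.Icc 1 (r-1) ∧ ypt mm ∈ P j := by
    intro j mm
    simp only [hYdef, Finset.mem_filter]
  have hPsub : ∀ j, P j ⊆ (↑XX : Set (Fin d → ℝ)) := fun j => isTP_subset hTP j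
  have hcoverX : ∀ z ∈ XX, ∃ j, z ∈ P j := by
    intro z hz
    have : z ∈ ⋃ i, P i := by rw [hTP.1]; exact_mod_cast hz
    exact Set.mem_iUnion.1 this
  have hSdisj : ∀ j j', j ≠ j' → ∀ v, v ∈ S j → v ∈ S j' → False := by
    intro j j' hne v hv hv'
    exact Set.disjoint_left.1 (hTP.2.1 j j' hne) ((hSmem j v).1 hv).2 ((hSmem j' v).1 hv').2
  have hYdisj : ∀ j j', j ≠ j' → ∀ mm, mm ∈ Y j → mm ∈ Y j' → False := by
    intro j j' hne mm h h'
    exact Set.disjoint_left.1 (hTP.2.1 j j' hne) ((hYmem j mm).1 h).2 ((hYmem j' mm).1 h').2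
  have hScover : ∀ v ∈ X', ∃ j, v ∈ S j := by
    intro v hv
    obtain ⟨j, hj⟩ := hcoverX (L v) (Finset.mem_union_left _ (Finset.mem_image_of_mem L hv))
    exact ⟨j, (hSmem j v).2 ⟨hv, hj⟩⟩
  have hYcover : ∀ mm ∈ Finset.Icc 1 (r-1), ∃ j, mm ∈ Y j := by
    intro mm hmm
    obtain ⟨j, hj⟩ := hcoverX (ypt mm)
      (Finset.mem_union_right _ (Finset.mem_image_of_mem ypt hmm))
    exact ⟨j, (hYmem j mm).2 ⟨hmm, hj⟩⟩
  have hQdecomp : ∀ j, XX.filter (· ∈ P j) = (S j).image L ∪ (Y j).image ypt := by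
    intro j
    ext z
    simp only [Finset.mem_filter, Finset.mem_union]
    constructor
    · rintro ⟨hzX, hzP⟩
      rcases Finset.mem_union.1 hzX with hz | hz
      · obtain ⟨v, hv, rfl⟩ := Finset.mem_image.1 hz
        exact Or.inl (Finset.mem_image_of_mem L ((hSmem j v).2 ⟨hv, hzP⟩))
      · obtain ⟨mm, hmm, rfl⟩ := Finset.mem_image.1 hz
        exact Or.inr (Finset.mem_image_of_mem ypt ((hYmem j mm).2 ⟨hmm, hzP⟩))
    · rintro (hz | hz)
      · obtain ⟨v, hv, rfl⟩ := Finset.mem_image.1 hz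
        have := (hSmem j v).1 hv
        exact ⟨Finset.mem_union_left _ (Finset.mem_image_of_mem L this.1), this.2⟩
      · obtain ⟨mm, hmm, rfl⟩ := Finset.mem_image.1 hz
        have := (hYmem j mm).1 hmm
        exact ⟨Finset.mem_union_right _ (Finset.mem_image_of_mem ypt this.1), this.2⟩
  have hQcoe : ∀ j, (↑(XX.filter (· ∈ P j)) : Set (Fin d → ℝ)) = P j :=
    fun j => coe_filter_part hTP j
  have hPdecomp : ∀ j, P j = (↑((S j).image L ∪ (Y j).image ypt) : Set (Fin d → ℝ)) := by
    intro j
    rw [← hQcoe j, hQdecomp j]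
  -- master representation lemma
  have hmaster : ∀ (A : Finset (Fin d → ℝ)) (Bm : Finset ℕ) (pp : Fin d → ℝ),
      A ⊆ X' → Bm ⊆ Finset.Icc 1 (r-1) →
      pp ∈ convexHull ℝ (↑(A.image L ∪ Bm.image ypt) : Set (Fin d → ℝ)) →
      ∃ (ω : (Fin d → ℝ) → ℝ) (β : ℕ → ℝ),
        (∀ v ∈ A, 0 ≤ ω v) ∧ (∀ mm ∈ Bm, 0 ≤ β mm) ∧
        ((∑ v ∈ A, ω v) + (∑ mm ∈ Bm, β mm) = 1) ∧
        ((∑ v ∈ A, ω v • v) = pp - (pp tF) • et) ∧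
        ((if x' k ∈ A then ω (x' k) * δ else 0) + (∑ mm ∈ Bm, β mm * (mm:ℝ)) = pp tF) := by
    intro A Bm pp hA hBm hpp
    obtain ⟨w, hw0, hw1, hwp⟩ := (mem_hull_iff _ _).1 hpp
    have hLinjA : ∀ x ∈ A, ∀ y ∈ A, L x = L y → x = y := fun x hx y hy =>
      hLinj (Finset.mem_coe.2 (hA hx)) (Finset.mem_coe.2 (hA hy))
    have hyinjB : ∀ x ∈ Bm, ∀ y ∈ Bm, ypt x = ypt y → x = y := fun x hx y hy =>
      hyinj (Finset.mem_coe.2 (hBm hx)) (Finset.mem_coe.2 (hBm hy))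
    have hdisjAB : Disjoint (A.image L) (Bm.image ypt) :=
      hXgYg.mono (Finset.image_subset_image hA) (Finset.image_subset_image hBm)
    have hsplitsum : ∑ v ∈ A, w (L v) • (L v)
        = (∑ v ∈ A, w (L v) • v) + (∑ v ∈ A, (w (L v) * c v)) • et := by
      have e1 : ∀ v ∈ A, w (L v) • (L v) = w (L v) • v + (w (L v) * c v) • et := by
        intro v _
        show w (L v) • (v + (c v) • et) = w (L v) • v + (w (L v) * c v) • et
        rw [smul_add, smul_smul]
      rw [Finset.sum_congr rfl e1, Finset.sum_add_distrib, ← Finset.sum_smul]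
    have hsplity : ∑ mm ∈ Bm, w (ypt mm) • (ypt mm)
        = (∑ mm ∈ Bm, w (ypt mm) * (mm:ℝ)) • et := by
      rw [Finset.sum_smul]
      apply Finset.sum_congr rfl
      intro mm _
      show w (ypt mm) • ((mm:ℝ) • et) = (w (ypt mm) * (mm:ℝ)) • et
      rw [smul_smul]
    have e3 : ∑ v ∈ A, (w (L v) * c v)
        = if x' k ∈ A then w (L (x' k)) * δ else 0 := by
      have e4 : ∀ v ∈ A, w (L v) * c v = if v = x' k then w (L v) * δ else 0 := by
        intro v _
        show w (L v) * (if v = x' k then δ else 0) = if v = x' k then w (L v) * δ else 0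
        rw [mul_ite, mul_zero]
      rw [Finset.sum_congr rfl e4, Finset.sum_ite_eq' A (x' k) (fun v => w (L v) * δ)]
    have hkeyeq : pp = (∑ v ∈ A, w (L v) • v)
        + ((if x' k ∈ A then w (L (x' k)) * δ else 0)
            + (∑ mm ∈ Bm, w (ypt mm) * (mm:ℝ))) • et := by
      have hU : ∑ z ∈ A.image L ∪ Bm.image ypt, w z • z
          = (∑ v ∈ A, w (L v) • v)
            + ((if x' k ∈ A then w (L (x' k)) * δ else 0)
              + (∑ mm ∈ Bm, w (ypt mm) * (mm:ℝ))) • et := by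
        rw [Finset.sum_union hdisjAB,
          Finset.sum_image (f := fun z => w z • z) hLinjA,
          Finset.sum_image (f := fun z => w z • z) hyinjB,
          hsplitsum, hsplity, e3, add_assoc, ← add_smul]
      rw [← hwp, hU]
    have hzero : (∑ v ∈ A, w (L v) • v) tF = 0 := by
      rw [Finset.sum_apply]
      apply Finset.sum_eq_zero
      intro v hv
      rw [Pi.smul_apply, smul_eq_mul, hvtF v (hA hv), mul_zero]
    have hhtF : pp tF = (if x' k ∈ A then w (L (x' k)) * δ else 0)
        + (∑ mm ∈ Bm, w (ypt mm) * (mm:ℝ)) := by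
      have := congrFun hkeyeq tF
      rw [Pi.add_apply, Pi.smul_apply, smul_eq_mul, het_t, mul_one, hzero, zero_add] at this
      exact this
    refine ⟨fun v => w (L v), fun mm => w (ypt mm), ?_, ?_, ?_, ?_, hhtF.symm⟩
    · intro v hv
      exact hw0 _ (Finset.mem_union_left _ (Finset.mem_image_of_mem L hv))
    · intro mm hmm
      exact hw0 _ (Finset.mem_union_right _ (Finset.mem_image_of_mem ypt hmm))
    · rw [Finset.sum_union hdisjAB, Finset.sum_image (f := w) hLinjA,
        Finset.sum_image (f := w) hyinjB] at hw1
      exact hw1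
    · rw [hhtF, hkeyeq]
      abel
  -- ground TP builder
  have hTPground : ∀ q0 : Fin d → ℝ,
      (∀ j, q0 ∈ convexHull ℝ (↑(S j) : Set (Fin d → ℝ))) →
      IsTP r X' (fun j => (↑(S j) : Set (Fin d → ℝ))) q0 := by
    intro q0 hq0
    refine ⟨?_, ?_, hq0⟩
    · ext v
      simp only [Set.mem_iUnion, Finset.mem_coe]
      constructor
      · rintro ⟨j, hj⟩
        exact ((hSmem j v).1 hj).1
      · intro hv
        exact hScover v hv
    · intro j j' hne
      rw [Set.disjoint_left]
      intro v hv hv'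
      exact hSdisj j j' hne v (Finset.mem_coe.1 hv) (Finset.mem_coe.1 hv')
  -- p tF = 0 is impossible
  have hpT0 : p tF = 0 → False := by
    intro h0
    have hmem : ∀ j, p ∈ convexHull ℝ (↑((S j).erase (x' k)) : Set (Fin d → ℝ)) := by
      intro j
      have hp := hTP.2.2 j
      rw [hPdecomp j] at hp
      obtain ⟨ω, β, hω0, hβ0, hsum1, hvec, hht⟩ :=
        hmaster (S j) (Y j) p (hSsub j) (hYsub j) hp
      rw [h0] at hht hvec
      have hitenn : 0 ≤ (if x' k ∈ S j then ω (x' k) * δ else 0) := by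
        split
        · exact mul_nonneg (hω0 _ (by assumption)) hδpos.le
        · exact le_refl 0
      have h2t : ∀ mm' ∈ Y j, 0 ≤ β mm' * (mm':ℝ) := fun mm' hmm' =>
        mul_nonneg (hβ0 mm' hmm') (Nat.cast_nonneg _)
      have hs2 : ∑ mm' ∈ Y j, β mm' * (mm':ℝ) = 0 := by
        have hnn := Finset.sum_nonneg h2t
        linarith
      have hβz : ∀ mm ∈ Y j, β mm = 0 := by
        intro mm hmm
        have hz : β mm * (mm:ℝ) = 0 := (Finset.sum_eq_zero_iff_of_nonneg h2t).1 hs2 mm hmm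
        have hmm1 : (1:ℝ) ≤ (mm:ℝ) := by
          exact_mod_cast (Finset.mem_Icc.1 (hYsub j hmm)).1
        rcases mul_eq_zero.1 hz with h | h
        · exact h
        · linarith
      have hωk : x' k ∈ S j → ω (x' k) = 0 := by
        intro hk'
        rw [hs2, add_zero, if_pos hk'] at hht
        rcases mul_eq_zero.1 hht with h | h
        · exact h
        · exact absurd h (ne_of_gt hδpos)
      have hsumβ : ∑ mm ∈ Y j, β mm = 0 :=
        Finset.sum_eq_zero fun mm hmm => hβz mm hmm
      have hsumω : ∑ v ∈ S j, ω v = 1 := by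
        rw [hsumβ] at hsum1
        linarith
      have hvec' : ∑ v ∈ S j, ω v • v = p := by
        rw [zero_smul, sub_zero] at hvec
        exact hvec
      by_cases hk' : x' k ∈ S j
      · apply (mem_hull_iff _ _).2
        have hsume : ∑ v ∈ (S j).erase (x' k), ω v + ω (x' k) = ∑ v ∈ S j, ω v :=
          Finset.sum_erase_add _ _ hk'
        have hvece : ∑ v ∈ (S j).erase (x' k), ω v • v + ω (x' k) • (x' k)
            = ∑ v ∈ S j, ω v • v :=
          Finset.sum_erase_add _ _ hk'
        refine ⟨ω, fun z hz => hω0 z (Finset.mem_of_mem_erase hz), ?_, ?_⟩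
        · rw [hωk hk'] at hsume
          rw [hsumω] at hsume
          linarith
        · rw [hωk hk', zero_smul, add_zero, hvec'] at hvece
          exact hvece
      · rw [Finset.erase_eq_of_notMem hk']
        exact (mem_hull_iff _ _).2 ⟨ω, hω0, hsumω, hvec'⟩
    have hmemS : ∀ j, p ∈ convexHull ℝ (↑(S j) : Set (Fin d → ℝ)) := fun j =>
      convexHull_mono (Finset.coe_subset.2 (Finset.erase_subset _ _)) (hmem j)
    obtain ⟨gaz, ga2z, gcz⟩ := hmain' (fun j => ↑(S j)) p (hTPground p hmemS)
    obtain ⟨js, hjs⟩ := hScover (x' k) (hx'mem k)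
    apply gcz js (x' k) (Finset.mem_coe.2 hjs)
    rw [← Finset.coe_erase]
    exact hmem js
  have hpTnn : 0 ≤ p tF := by
    have hp := hTP.2.2 ⟨0, hr⟩
    rw [hPdecomp ⟨0, hr⟩] at hp
    obtain ⟨ω, β, hω0, hβ0, hsum1, hvec, hht⟩ :=
      hmaster _ _ p (hSsub ⟨0, hr⟩) (hYsub ⟨0, hr⟩) hp
    rw [← hht]
    apply add_nonneg
    · split
      · exact mul_nonneg (hω0 _ (by assumption)) hδpos.le
      · exact le_refl 0
    · exact Finset.sum_nonneg fun mm hmm =>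
        mul_nonneg (hβ0 mm hmm) (Nat.cast_nonneg _)
  have hpT : 0 < p tF := lt_of_le_of_ne hpTnn (fun h => hpT0 h.symm)
  -- ground representation lemma
  have hground : ∀ (A : Finset (Fin d → ℝ)), A ⊆ X' →
      p ∈ convexHull ℝ (↑(A.image L) : Set (Fin d → ℝ)) →
      (x' k ∈ A ∧ (p - (p tF) • et) ∈ convexHull ℝ (↑A : Set (Fin d → ℝ)) ∧ p tF ≤ δ) := by
    intro A hA hp
    have hp' : p ∈ convexHull ℝ
        (↑(A.image L ∪ (∅ : Finset ℕ).image ypt) : Set (Fin d → ℝ)) := by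
      rw [Finset.image_empty, Finset.union_empty]
      exact hp
    obtain ⟨ω, β, hω0, hβ0, hsum1, hvec, hht⟩ :=
      hmaster A ∅ p hA (Finset.empty_subset _) hp'
    simp only [Finset.sum_empty] at hsum1 hht
    rw [add_zero] at hsum1 hht
    have hkA : x' k ∈ A := by
      by_contra hk'
      rw [if_neg hk'] at hht
      exact hpT0 hht.symm
    refine ⟨hkA, ?_, ?_⟩
    · exact (mem_hull_iff _ _).2 ⟨ω, hω0, hsum1, hvec⟩
    · rw [if_pos hkA] at hht
      have hω1 : ω (x' k) ≤ 1 := by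
        have := Finset.single_le_sum hω0 hkA
        linarith
      calc p tF = ω (x' k) * δ := hht.symm
        _ ≤ 1 * δ := mul_le_mul_of_nonneg_right hω1 hδpos.le
        _ = δ := one_mul δ
  -- there is a y-free part
  have hyfree : ∃ i0, Y i0 = ∅ := by
    by_contra hcon
    push_neg at hcon
    have hne : ∀ j, (Y j).Nonempty := fun j => hcon j
    choose f hf using hne
    have hcard := Finset.card_le_card_of_injOn (s := (Finset.univ : Finset (Fin r)))
      (t := Finset.Icc 1 (r-1)) f (fun j _ => hYsub j (hf j))
      (fun j _ j' _ he => by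
        by_contra hne'
        exact hYdisj j j' hne' (f j) (hf j) (he ▸ hf j'))
    rw [Finset.card_univ, Fintype.card_fin, Nat.card_Icc] at hcard
    omega
  obtain ⟨i0, hi0⟩ := hyfree
  have hQi0 : P i0 = (↑((S i0).image L) : Set (Fin d → ℝ)) := by
    rw [hPdecomp i0, hi0, Finset.image_empty, Finset.union_empty]
  obtain ⟨hki0, hqmem_i0, hpTδ⟩ :=
    hground (S i0) (hSsub i0) (by rw [← hQi0]; exact hTP.2.2 i0)
  set q : Fin d → ℝ := p - (p tF) • et with hqdef
  have hkonly : ∀ j, x' k ∈ S j → j = i0 := by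
    intro j hj
    by_contra hne
    exact hSdisj j i0 hne (x' k) hj hki0
  have hYco : Finset.univ.biUnion Y = Finset.Icc 1 (r-1) := by
    ext mm
    simp only [Finset.mem_biUnion, Finset.mem_univ, true_and]
    constructor
    · rintro ⟨j, hj⟩
      exact hYsub j hj
    · intro hmm
      exact hYcover mm hmm
  have hIcc_card : (Finset.Icc 1 (r-1)).card = r - 1 := by
    rw [Nat.card_Icc]
    omega
  have hYsum : ∑ j, (Y j).card = r - 1 := by
    have hcb : (Finset.univ.biUnion Y).card = ∑ j, (Y j).card :=
      Finset.card_biUnion (fun j _ j' _ hne => by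
        rw [Function.onFun_apply, Finset.disjoint_left]
        intro mm h h'
        exact (hYdisj j j' hne mm h h').elim)
    rw [hYco, hIcc_card] at hcb
    exact hcb.symm
  have hY1 : ∀ j, j ≠ i0 → ∃ mj, Y j = {mj} ∧ 1 ≤ mj ∧ mj ≤ r - 1 := by
    intro j hj
    have hge : ∀ jj ∈ Finset.univ.erase i0, 1 ≤ (Y jj).card := by
      intro jj hjj
      rcases Finset.eq_empty_or_nonempty (Y jj) with he | hne
      · exfalso
        have hQjj : P jj = (↑((S jj).image L) : Set (Fin d → ℝ)) := by
          rw [hPdecomp jj, he, Finset.image_empty, Finset.union_empty]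
        obtain ⟨hk', _, _⟩ := hground (S jj) (hSsub jj)
          (by rw [← hQjj]; exact hTP.2.2 jj)
        exact (Finset.ne_of_mem_erase hjj) (hkonly jj hk')
      · exact Finset.card_pos.2 hne
    have hadd : ∑ jj ∈ Finset.univ.erase i0, (Y jj).card + (Y i0).card
        = ∑ jj, (Y jj).card :=
      Finset.sum_erase_add _ _ (Finset.mem_univ i0)
    have hcerase : (Finset.univ.erase i0).card = r - 1 := by
      rw [Finset.card_erase_of_mem (Finset.mem_univ i0), Finset.card_univ, Fintype.card_fin]
    have hsum' : ∑ jj ∈ Finset.univ.erase i0, (Y jj).card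
        = 1 * (Finset.univ.erase i0).card := by
      rw [hi0, Finset.card_empty] at hadd
      rw [one_mul, hcerase]
      omega
    have hcard1 := sum_eq_card_forces _ _ 1 hge hsum' j
      (Finset.mem_erase.2 ⟨hj, Finset.mem_univ j⟩)
    obtain ⟨mj, hmj⟩ := Finset.card_eq_one.1 hcard1
    have hmjI : mj ∈ Finset.Icc 1 (r-1) :=
      hYsub j (by rw [hmj]; exact Finset.mem_singleton_self mj)
    exact ⟨mj, hmj, (Finset.mem_Icc.1 hmjI).1, (Finset.mem_Icc.1 hmjI).2⟩
  -- key distance lemma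
  have hkey : ∀ (j : Fin r) (A : Finset (Fin d → ℝ)) (mj : ℕ), A ⊆ X' → x' k ∉ A →
      Y j = {mj} → 1 ≤ mj →
      p ∈ convexHull ℝ (↑(A.image L ∪ (Y j).image ypt) : Set (Fin d → ℝ)) →
      (A.Nonempty ∧ Metric.infDist q (convexHull ℝ (↑A : Set (Fin d → ℝ))) ≤ δ * B) := by
    intro j A mj hA hkA hYj hmj1 hp
    obtain ⟨ω, β, hω0, hβ0, hsum1, hvec, hht⟩ := hmaster A (Y j) p hA (hYsub j) hp
    rw [← hqdef] at hvec
    rw [hYj, Finset.sum_singleton] at hsum1 hht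
    rw [if_neg hkA, zero_add] at hht
    set lam := β mj with hlam
    have hlam0 : 0 ≤ lam := hβ0 mj (by rw [hYj]; exact Finset.mem_singleton_self mj)
    have hlamle : lam ≤ δ := by
      have h1m : (1:ℝ) ≤ (mj:ℝ) := by exact_mod_cast hmj1
      calc lam = lam * 1 := (mul_one lam).symm
        _ ≤ lam * (mj:ℝ) := mul_le_mul_of_nonneg_left h1m hlam0
        _ = p tF := hht
        _ ≤ δ := hpTδ
    have hlamlt : lam < 1 := by linarith
    have hsumω : ∑ v ∈ A, ω v = 1 - lam := by linarith
    have hApos : (0:ℝ) < 1 - lam := by linarith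
    have hAne : A.Nonempty := by
      rcases Finset.eq_empty_or_nonempty A with rfl | h
      · exfalso
        rw [Finset.sum_empty] at hsumω
        linarith
      · exact h
    refine ⟨hAne, ?_⟩
    set u : Fin d → ℝ := (1 - lam)⁻¹ • q with hu
    have humem : u ∈ convexHull ℝ (↑A : Set (Fin d → ℝ)) := by
      apply (mem_hull_iff _ _).2
      refine ⟨fun v => (1 - lam)⁻¹ * ω v, fun v hv =>
        mul_nonneg (by positivity) (hω0 v hv), ?_, ?_⟩
      · rw [← Finset.mul_sum, hsumω, inv_mul_cancel₀ (ne_of_gt hApos)]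
      · calc ∑ v ∈ A, ((1 - lam)⁻¹ * ω v) • v
            = (1 - lam)⁻¹ • ∑ v ∈ A, ω v • v := by
              rw [Finset.smul_sum]
              exact Finset.sum_congr rfl fun v _ => by rw [smul_smul]
          _ = u := by rw [hvec]
    have hqu : q = (1 - lam) • u := by
      rw [hu, smul_smul, mul_inv_cancel₀ (ne_of_gt hApos), one_smul]
    have hdist : dist q u = lam * ‖u‖ := by
      rw [dist_eq_norm, hqu]
      have e5 : (1 - lam) • u - u = (-lam) • u := by
        rw [sub_smul, one_smul, neg_smul]
        abel
      rw [e5, norm_smul, Real.norm_eq_abs, abs_neg, abs_of_nonneg hlam0]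
    have hub : ‖u‖ ≤ B := hhull_bound A hA u humem
    calc Metric.infDist q (convexHull ℝ (↑A : Set (Fin d → ℝ)))
        ≤ dist q u := Metric.infDist_le_dist_of_mem humem
      _ = lam * ‖u‖ := hdist
      _ ≤ δ * B := mul_le_mul hlamle hub (norm_nonneg u) hδpos.le

  -- distances for all parts
  have hqmem_i0' : q ∈ convexHull ℝ (↑(S i0) : Set (Fin d → ℝ)) := hqmem_i0
  have hdists : ∀ j, Metric.infDist q (convexHull ℝ (↑(S j) : Set (Fin d → ℝ))) ≤ δ * B := by
    intro j
    rcases eq_or_ne j i0 with rfl | hj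
    · rw [Metric.infDist_zero_of_mem hqmem_i0']
      positivity
    · obtain ⟨mj, hYj, hmj1, _⟩ := hY1 j hj
      have hkA : x' k ∉ S j := fun hk' => hj (hkonly j hk')
      refine (hkey j (S j) mj (hSsub j) hkA hYj hmj1 ?_).2
      rw [← hPdecomp j]
      exact hTP.2.2 j
  have hSne : ∀ j, (S j).Nonempty := by
    intro j
    rcases eq_or_ne j i0 with rfl | hj
    · exact ⟨x' k, hki0⟩
    · obtain ⟨mj, hYj, hmj1, _⟩ := hY1 j hj
      have hkA : x' k ∉ S j := fun hk' => hj (hkonly j hk')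
      refine (hkey j (S j) mj (hSsub j) hkA hYj hmj1 ?_).1
      rw [← hPdecomp j]
      exact hTP.2.2 j
  obtain ⟨qd, hqd⟩ := hsep S hSsub hSne q (fun j => le_trans (hdists j) hδB)
  have hqd' : ∀ j, qd ∈ convexHull ℝ (↑(S j) : Set (Fin d → ℝ)) :=
    fun j => Set.mem_iInter.1 hqd j
  obtain ⟨ga, ga2, gc⟩ := hmain' (fun j => ↑(S j)) qd (hTPground qd hqd')
  have hxiS : ∀ i j, xx i ∈ P j ↔ x' i ∈ S j := by
    intro i j
    rw [hSmem]
    constructor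
    · intro h
      exact ⟨hx'mem i, h⟩
    · rintro ⟨_, h⟩
      exact h
  have hQcard : ∀ j, (P j).ncard = (S j).card + (Y j).card := by
    intro j
    rw [← hQcoe j, Set.ncard_coe_finset, hQdecomp j, Finset.card_union_of_disjoint
      (hXgYg.mono (Finset.image_subset_image (hSsub j))
        (Finset.image_subset_image (hYsub j))),
      Finset.card_image_of_injOn (hLinj.mono (by exact_mod_cast hSsub j)),
      Finset.card_image_of_injOn (hyinj.mono (by exact_mod_cast hYsub j))]
  have hsize : ∀ i j, x' i ∈ S j → (S j).card = a' i := by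
    intro i j hij
    have := ga i j (Finset.mem_coe.2 hij)
    rwa [Set.ncard_coe_finset] at this
  -- helper for image-erase
  have himg_erase : ∀ (A : Finset (Fin d → ℝ)) (w0 : Fin d → ℝ), A ⊆ X' → w0 ∈ A →
      (A.image L).erase (L w0) = (A.erase w0).image L := by
    intro A w0 hA hw0
    ext z
    simp only [Finset.mem_erase, Finset.mem_image]
    constructor
    · rintro ⟨hzne, v, hv, rfl⟩
      exact ⟨v, ⟨fun hvw => hzne (by rw [hvw]), hv⟩, rfl⟩
    · rintro ⟨v, ⟨hvne, hvA⟩, rfl⟩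
      exact ⟨fun he => hvne (hLinj (Finset.mem_coe.2 (hA hvA))
        (Finset.mem_coe.2 (hA hw0)) he), v, hvA, rfl⟩
  refine ⟨?_, ?_, ?_⟩
  · -- sizes
    intro i j hxi
    have hij : x' i ∈ S j := (hxiS i j).1 hxi
    rcases eq_or_ne j i0 with rfl | hj
    · have hik : i = k := ga2 i k j (Finset.mem_coe.2 hij) (Finset.mem_coe.2 hki0)
      rw [hQcard j, hi0, Finset.card_empty, Nat.add_zero, hsize i j hij, hik, ha'k]
    · obtain ⟨mj, hYj, _, _⟩ := hY1 j hj
      have hik : i ≠ k := by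
        intro h
        exact hj (hkonly j (h ▸ hij))
      rw [hQcard j, hYj, Finset.card_singleton, hsize i j hij]
      have hai := h1 i
      simp only [ha', if_neg hik]
      omega
  · -- distinctness
    intro i i' j hxi hxi'
    exact ga2 i i' j (Finset.mem_coe.2 ((hxiS i j).1 hxi))
      (Finset.mem_coe.2 ((hxiS i' j).1 hxi'))
  · -- minimality
    intro j z hz hcon
    have hcon' : p ∈ convexHull ℝ
        (↑(((S j).image L ∪ (Y j).image ypt).erase z) : Set (Fin d → ℝ)) := by
      rw [Finset.coe_erase, ← hPdecomp j]
      exact hcon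
    rcases eq_or_ne j i0 with rfl | hj
    · rw [hi0, Finset.image_empty, Finset.union_empty] at hcon'
      have hzQ : z ∈ (S j).image L := by
        have hz' : z ∈ P j := hz
        rw [hQi0] at hz'
        exact_mod_cast hz'
      obtain ⟨w0, hw0S, rfl⟩ := Finset.mem_image.1 hzQ
      rw [himg_erase (S j) w0 (hSsub j) hw0S] at hcon'
      rcases eq_or_ne w0 (x' k) with rfl | hwk
      · obtain ⟨hk', _, _⟩ := hground ((S j).erase (x' k))
          (Finset.Subset.trans (Finset.erase_subset _ _) (hSsub j)) hcon'
        exact (Finset.mem_erase.1 hk').1 rfl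
      · obtain ⟨_, hqmem', _⟩ := hground ((S j).erase w0)
          (Finset.Subset.trans (Finset.erase_subset _ _) (hSsub j)) hcon'
        set T : Fin r → Finset (Fin d → ℝ) :=
          Function.update S j ((S j).erase w0) with hT
        have hTval0 : T j = (S j).erase w0 := by
          rw [hT]
          exact Function.update_self j _ S
        have hTvalne : ∀ jj, jj ≠ j → T jj = S jj := by
          intro jj hjj
          rw [hT]
          exact Function.update_of_ne hjj _ S
        have hTsub : ∀ jj, T jj ⊆ X' := by
          intro jj
          rcases eq_or_ne jj j with rfl | h
          · rw [hTval0]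
            exact Finset.Subset.trans (Finset.erase_subset _ _) (hSsub jj)
          · rw [hTvalne jj h]
            exact hSsub jj
        have hTne : ∀ jj, (T jj).Nonempty := by
          intro jj
          rcases eq_or_ne jj j with rfl | h
          · rw [hTval0]
            exact ⟨x' k, Finset.mem_erase.2 ⟨Ne.symm hwk, hki0⟩⟩
          · rw [hTvalne jj h]
            exact hSne jj
        have hTdist : ∀ jj, Metric.infDist q
            (convexHull ℝ (↑(T jj) : Set (Fin d → ℝ))) ≤ Θ := by
          intro jj
          rcases eq_or_ne jj j with rfl | h
          · rw [hTval0, Metric.infDist_zero_of_mem hqmem']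
            exact hΘpos.le
          · rw [hTvalne jj h]
            exact le_trans (hdists jj) hδB
        obtain ⟨qe, hqe⟩ := hsep T hTsub hTne q hTdist
        have hqe' : ∀ jj, qe ∈ convexHull ℝ (↑(S jj) : Set (Fin d → ℝ)) := by
          intro jj
          have hmem' := Set.mem_iInter.1 hqe jj
          rcases eq_or_ne jj j with rfl | h
          · rw [hTval0] at hmem'
            exact convexHull_mono (Finset.coe_subset.2 (Finset.erase_subset _ _)) hmem'
          · rwa [hTvalne jj h] at hmem'
        obtain ⟨_, _, gce⟩ := hmain' (fun jj => ↑(S jj)) qe (hTPground qe hqe')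
        apply gce j w0 (Finset.mem_coe.2 hw0S)
        rw [← Finset.coe_erase]
        have hmem' := Set.mem_iInter.1 hqe j
        rwa [hTval0] at hmem'
    · obtain ⟨mj, hYj, hmj1, _⟩ := hY1 j hj
      have hkSj : x' k ∉ S j := fun hk' => hj (hkonly j hk')
      have hzQ : z ∈ (S j).image L ∪ {ypt mj} := by
        have hz' : z ∈ P j := hz
        rw [hPdecomp j, hYj, Finset.image_singleton] at hz'
        exact_mod_cast hz'
      rw [hYj, Finset.image_singleton] at hcon'
      rcases Finset.mem_union.1 hzQ with hzL | hzy
      · obtain ⟨w0, hw0S, rfl⟩ := Finset.mem_image.1 hzL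
        have hLy : L w0 ≠ ypt mj := by
          intro he
          have h1' := hLtF w0 (hSsub j hw0S)
          have h2' : (L w0) tF = (mj : ℝ) := by rw [he]; exact hyptF mj
          have h3' := hc_le w0
          have h4' : (1:ℝ) ≤ (mj:ℝ) := by exact_mod_cast hmj1
          rw [h1'] at h2'
          linarith
        have herase : ((S j).image L ∪ {ypt mj}).erase (L w0)
            = ((S j).erase w0).image L ∪ {ypt mj} := by
          rw [Finset.erase_union_distrib, himg_erase (S j) w0 (hSsub j) hw0S,
            Finset.erase_eq_of_notMem (fun hmem' =>
              hLy (Finset.mem_singleton.1 hmem'))]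
        rw [herase] at hcon'
        rcases Finset.eq_empty_or_nonempty ((S j).erase w0) with hSe | hSne'
        · rw [hSe, Finset.image_empty, Finset.empty_union] at hcon'
          simp only [Finset.coe_singleton, convexHull_singleton,
            Set.mem_singleton_iff] at hcon'
          have he1 : p tF = (mj : ℝ) := by rw [hcon']; exact hyptF mj
          have he2 : (1:ℝ) ≤ (mj:ℝ) := by exact_mod_cast hmj1
          linarith
        · have hcon'' : p ∈ convexHull ℝ
              (↑(((S j).erase w0).image L ∪ (Y j).image ypt) : Set (Fin d → ℝ)) := by
            rw [hYj, Finset.image_singleton]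
            exact hcon'
          have hkA : x' k ∉ (S j).erase w0 := fun h => hkSj (Finset.mem_of_mem_erase h)
          obtain ⟨_, hdist'⟩ := hkey j ((S j).erase w0) mj
            (Finset.Subset.trans (Finset.erase_subset _ _) (hSsub j)) hkA hYj hmj1 hcon''
          set T : Fin r → Finset (Fin d → ℝ) :=
            Function.update S j ((S j).erase w0) with hT
          have hTval0 : T j = (S j).erase w0 := by
            rw [hT]
            exact Function.update_self j _ S
          have hTvalne : ∀ jj, jj ≠ j → T jj = S jj := by
            intro jj hjj
            rw [hT]
            exact Function.update_of_ne hjj _ S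
          have hTsub : ∀ jj, T jj ⊆ X' := by
            intro jj
            rcases eq_or_ne jj j with rfl | h
            · rw [hTval0]
              exact Finset.Subset.trans (Finset.erase_subset _ _) (hSsub jj)
            · rw [hTvalne jj h]
              exact hSsub jj
          have hTne : ∀ jj, (T jj).Nonempty := by
            intro jj
            rcases eq_or_ne jj j with rfl | h
            · rw [hTval0]
              exact hSne'
            · rw [hTvalne jj h]
              exact hSne jj
          have hTdist : ∀ jj, Metric.infDist q
              (convexHull ℝ (↑(T jj) : Set (Fin d → ℝ))) ≤ Θ := by
            intro jj
            rcases eq_or_ne jj j with rfl | h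
            · rw [hTval0]
              exact le_trans hdist' hδB
            · rw [hTvalne jj h]
              exact le_trans (hdists jj) hδB
          obtain ⟨qe, hqe⟩ := hsep T hTsub hTne q hTdist
          have hqe' : ∀ jj, qe ∈ convexHull ℝ (↑(S jj) : Set (Fin d → ℝ)) := by
            intro jj
            have hmem' := Set.mem_iInter.1 hqe jj
            rcases eq_or_ne jj j with rfl | h
            · rw [hTval0] at hmem'
              exact convexHull_mono (Finset.coe_subset.2 (Finset.erase_subset _ _)) hmem'
            · rwa [hTvalne jj h] at hmem'
          obtain ⟨_, _, gce⟩ := hmain' (fun jj => ↑(S jj)) qe (hTPground qe hqe')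
          apply gce j w0 (Finset.mem_coe.2 hw0S)
          rw [← Finset.coe_erase]
          have hmem' := Set.mem_iInter.1 hqe j
          rwa [hTval0] at hmem'
      · have hzy' : z = ypt mj := Finset.mem_singleton.1 hzy
        subst hzy'
        have herase : ((S j).image L ∪ {ypt mj}).erase (ypt mj) = (S j).image L := by
          rw [Finset.erase_union_distrib, Finset.erase_singleton, Finset.union_empty,
            Finset.erase_eq_of_notMem]
          intro hmem'
          have hmem1 : ypt mj ∈ Xg :=
            Finset.mem_of_subset (Finset.image_subset_image (hSsub j)) hmem'
          have hmem2 : ypt mj ∈ Yg := by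
            apply Finset.mem_image_of_mem
            rw [Finset.mem_Icc]
            obtain ⟨mj', hmj'⟩ := hY1 j hj
            have := hYsub j (by rw [hYj]; exact Finset.mem_singleton_self mj)
            exact Finset.mem_Icc.1 this
          exact Finset.disjoint_left.1 hXgYg hmem1 hmem2
        rw [herase] at hcon'
        obtain ⟨hk', _, _⟩ := hground (S j) (hSsub j) hcon'
        exact hkSj hk'

end Step

lemma good_all (r : ℕ) (hr : 1 ≤ r) (hd : 1 ≤ d) :
    ∀ t, 1 ≤ t → t ≤ d → ∀ a : Fin r → ℕ,
      (∀ i, 1 ≤ a i) → (∀ i, a i ≤ t + 1) →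
      (∑ i, a i = (t + 1) * (r - 1) + 1) → Good d r t a := by
  intro t
  induction t with
  | zero => exact fun h => absurd h (by norm_num)
  | succ t ih =>
    intro _ htd a ha1 ha2 has
    rcases Nat.eq_zero_or_pos t with rfl | ht
    · exact good_base r hr (by omega) a ha1 ha2 has
    · exact good_step r t hr (by omega) a ha1 ha2 has
        (fun a' h1 h2 h3 => ih ht (by omega) a' h1 h2 h3)

end

end TvbForced

open Set

/-- Theorem 1 (main theorem): for all `d, r ≥ 1`, `n = (d+1)(r-1)+1`, and positive
integers `a_1,...,a_r ≤ d+1` with `∑ a_i = n`, there is a set `X ⊆ ℝ^d` of `n`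
points such that every Tverberg partition of `X` has part sizes which are a
permutation of `a_1,...,a_r`. -/
theorem tverberg_partition_sizes_forced (d r : ℕ) (hd : 1 ≤ d) (hr : 1 ≤ r)
    (a : Fin r → ℕ) (hpos : ∀ i, 1 ≤ a i) (hle : ∀ i, a i ≤ d + 1)
    (hsum : ∑ i, a i = (d + 1) * (r - 1) + 1) :
    ∃ X : Set (Fin d → ℝ), X.Finite ∧ X.ncard = (d + 1) * (r - 1) + 1 ∧
      ∀ P : Fin r → Set (Fin d → ℝ),
        (⋃ i, P i) = X →
        (∀ i i', i ≠ i' → Disjoint (P i) (P i')) →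
        (∃ p : Fin d → ℝ, ∀ i, p ∈ convexHull ℝ (P i)) →
        ∃ σ : Equiv.Perm (Fin r), ∀ i, (P i).ncard = a (σ i) := by
  classical
  obtain ⟨X, x, hflat, hcard, hxmem, hxinj, hmain⟩ :=
    TvbForced.good_all (d := d) r hr hd d hd le_rfl a hpos hle hsum
  refine ⟨↑X, X.finite_toSet, ?_, ?_⟩
  · rw [Set.ncard_coe_finset, hcard]
  · intro P hcov hdisj hp
    obtain ⟨p, hp⟩ := hp
    obtain ⟨ga, ga2, _⟩ := hmain P p ⟨hcov, hdisj, hp⟩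
    have hex : ∀ i, ∃ j, x i ∈ P j := by
      intro i
      have hx : x i ∈ ⋃ j, P j := by
        rw [hcov]
        exact Finset.mem_coe.2 (hxmem i)
      exact Set.mem_iUnion.1 hx
    choose f hf using hex
    have hfinj : Function.Injective f := fun i i' he =>
      ga2 i i' (f i) (hf i) (by rw [he]; exact hf i')
    have hfbij : Function.Bijective f := Finite.injective_iff_bijective.1 hfinj
    refine ⟨(Equiv.ofBijective f hfbij).symm, ?_⟩
    intro j
    have hfs : f ((Equiv.ofBijective f hfbij).symm j) = j :=
      (Equiv.ofBijective f hfbij).apply_symm_apply j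
    have hmemj : x ((Equiv.ofBijective f hfbij).symm j) ∈ P j := by
      have h := hf ((Equiv.ofBijective f hfbij).symm j)
      rwa [hfs] at h
    exact ga ((Equiv.ofBijective f hfbij).symm j) j hmemj
end

section
/- Let X be the constructed set. The number of Tverberg partitions of X into r parts (counted up to relabeling of the parts, equivalently as unordered partitions) is exactly ((r−1)!)^d. -/
open Finset Set

/-!
The common point `p` of a Tverberg `r`-partition of `X` is forced to be `0`. A positive
coordinate `p j` would put one of the `r - 1` points of `A_j` into each of the `r` parts, so
`p ≤ 0`; the points of the `A_j` have positive coordinate sum, so every part contains some `x^i`,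
hence exactly one; and the part of `x^(ι j)` lies in `{v | 0 ≤ v j}`, so `p = 0`. With `p = 0`,
the part of `x^i` must meet every axis `j` with `ι j ≠ i`, so on each axis the `r - 1` points of
`A_j` are matched bijectively with the `r - 1` parts other than that of `x^(ι j)`. Conversely
every such family of matchings gives a Tverberg partition with common point `0`, and there are
`((r - 1)!)^d` of them.
-/

section General

open Function

variable {α κ : Type*}

theorem Set.PairwiseDisjoint.ncard_le_of_forall_exists_mem [Finite κ] {C : Set (Set α)}
    (hC : C.PairwiseDisjoint id) (f : κ → α) (h : ∀ S ∈ C, ∃ k, f k ∈ S) :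
    C.ncard ≤ Nat.card κ := by
  choose F hF using h
  rw [← Nat.card_coe_set_eq]
  refine Nat.card_le_card_of_injective (fun S : C => F S S.2) fun S S' hSS' => ?_
  have hS' : f (F S S.2) ∈ S'.1 := by simpa only [hSS'] using hF S' S'.2
  exact Subtype.ext <| hC.elim_set S.2 S'.2 _ (hF S S.2) hS'

theorem Pairwise.eq_of_mem_of_mem {P : κ → Set α} (hP : Pairwise (Disjoint on P)) {a : α}
    {i j : κ} (hi : a ∈ P i) (hj : a ∈ P j) : i = j :=
  hP.eq (Set.not_disjoint_iff.2 ⟨a, hi, hj⟩)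

theorem Pairwise.eq_of_subset_of_iUnion_subset {P Q : κ → Set α}
    (hP : Pairwise (Disjoint on P)) (hQP : ∀ i, Q i ⊆ P i) (hcov : ⋃ i, P i ⊆ ⋃ i, Q i) :
    P = Q := by
  refine funext fun i => (Set.Subset.antisymm ?_ (hQP i))
  intro a ha
  obtain ⟨j, hj⟩ := Set.mem_iUnion.1 (hcov (Set.mem_iUnion_of_mem i ha))
  rwa [hP.eq_of_mem_of_mem ha (hQP j hj)]

variable {E : Type*} [AddCommGroup E] [Module ℝ E]

theorem LinearMap.exists_apply_ge_of_mem_convexHull (f : E →ₗ[ℝ] ℝ) {S : Set E} {x : E}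
    (hx : x ∈ convexHull ℝ S) : ∃ y ∈ S, f x ≤ f y :=
  (f.convexOn convex_univ).exists_ge_of_mem_convexHull (Set.subset_univ S) hx

theorem LinearMap.exists_apply_le_of_mem_convexHull (f : E →ₗ[ℝ] ℝ) {S : Set E} {x : E}
    (hx : x ∈ convexHull ℝ S) : ∃ y ∈ S, f y ≤ f x :=
  (f.concaveOn convex_univ).exists_le_of_mem_convexHull (Set.subset_univ S) hx

theorem zero_mem_convexHull_of_add_sum_smul_eq_zero [Fintype κ] {S : Set E} {x : E}
    {y : κ → E} {c : κ → ℝ} (hx : x ∈ S) (hy : ∀ k, y k ∈ S) (hc : ∀ k, 0 ≤ c k)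
    (h : x + ∑ k, c k • y k = 0) : (0 : E) ∈ convexHull ℝ S := by
  let w : Option κ → ℝ := fun o => o.elim 1 c
  let z : Option κ → E := fun o => o.elim x y
  have hw : ∀ o ∈ Finset.univ, 0 ≤ w o := by rintro (_ | k) - <;> simp [w, hc]
  have hwpos : 0 < ∑ o, w o := by
    rw [Fintype.sum_option]
    exact add_pos_of_pos_of_nonneg one_pos (Finset.sum_nonneg fun k _ => hc k)
  have hz : ∀ o ∈ Finset.univ, z o ∈ S := by rintro (_ | k) - <;> simp [z, hx, hy]
  convert Finset.univ.centerMass_mem_convexHull hw hwpos hz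
  simp [Finset.centerMass, Fintype.sum_option, w, z, h]

end General

namespace TverbergConstruction

open Function

variable {d r : ℕ} {ι : Fin d → Fin r}

/-- The point `(k + 1) e^j` of `A_j`; `k : Fin (r - 1)` is shifted by one. -/
noncomputable def axisPt (d r : ℕ) (j : Fin d) (k : Fin (r - 1)) : Fin d → ℝ :=
  ((k : ℕ) + 1 : ℝ) • stdVec d j

theorem axisPt_apply (j : Fin d) (k : Fin (r - 1)) (j' : Fin d) :
    axisPt d r j k j' = if j' = j then ((k : ℕ) + 1 : ℝ) else 0 := by
  simp [axisPt, stdVec, Pi.single_apply]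

@[simp]
theorem axisPt_apply_self (j : Fin d) (k : Fin (r - 1)) : axisPt d r j k j = (k : ℕ) + 1 := by
  simp [axisPt_apply]

theorem axisPt_apply_of_ne {j j' : Fin d} (k : Fin (r - 1)) (h : j' ≠ j) :
    axisPt d r j k j' = 0 := by
  simp [axisPt_apply, h]

theorem sum_axisPt (j : Fin d) (k : Fin (r - 1)) : ∑ j', axisPt d r j k j' = (k : ℕ) + 1 := by
  simp [axisPt_apply]

theorem axisPt_inj {j j' : Fin d} {k k' : Fin (r - 1)} :
    axisPt d r j k = axisPt d r j' k' ↔ j = j' ∧ k = k' := by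
  refine ⟨fun h => ?_, fun ⟨hj, hk⟩ => hj ▸ hk ▸ rfl⟩
  have hj := congrFun h j
  by_cases hjj : j = j'
  · subst hjj
    simp only [axisPt_apply_self, add_left_inj, Nat.cast_inj] at hj
    exact ⟨rfl, Fin.ext hj⟩
  · rw [axisPt_apply_self, axisPt_apply_of_ne _ hjj] at hj
    exact absurd hj (by positivity)

theorem xpt_nonpos (i : Fin r) (j : Fin d) : xpt d r ι i j ≤ 0 := by
  have : (0 : ℝ) ≤ (i : ℕ) := Nat.cast_nonneg _
  unfold xpt
  split_ifs <;> linarith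

theorem neg_mul_le_sum_xpt (i : Fin r) : -(d * ((i : ℕ) + 1 : ℝ)) ≤ ∑ j, xpt d r ι i j := by
  have : (0 : ℝ) ≤ (i : ℕ) := Nat.cast_nonneg _
  calc -(d * ((i : ℕ) + 1 : ℝ)) = ∑ _j : Fin d, -((i : ℕ) + 1 : ℝ) := by simp; ring
    _ ≤ ∑ j, xpt d r ι i j := Finset.sum_le_sum fun j _ => by unfold xpt; split_ifs <;> linarith

theorem axisPt_ne_xpt (j : Fin d) (k : Fin (r - 1)) (i : Fin r) : axisPt d r j k ≠ xpt d r ι i :=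
  fun h => by linarith [congrFun h j ▸ xpt_nonpos (ι := ι) i j, axisPt_apply_self (r := r) j k]

theorem xpt_injective (hd : 1 ≤ d) : Injective (xpt d r ι) := by
  intro i i' h
  have hj := congrFun h ⟨0, hd⟩
  have : (0 : ℝ) ≤ (i : ℕ) ∧ (0 : ℝ) ≤ (i' : ℕ) := ⟨Nat.cast_nonneg _, Nat.cast_nonneg _⟩
  simp only [xpt] at hj
  split_ifs at hj with hi hi'
  · exact hi.symm.trans hi'
  · linarith
  · linarith
  · exact Fin.ext (by simpa using hj)

theorem mem_Xset_iff {v : Fin d → ℝ} :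
    v ∈ Xset d r ι ↔ (∃ i, xpt d r ι i = v) ∨ ∃ j k, axisPt d r j k = v := by
  simp only [Xset, Apts, Aset, Set.mem_union, Set.mem_range, Set.mem_iUnion, Set.mem_ofPred_eq]
  refine or_congr Iff.rfl (exists_congr fun j => ⟨?_, ?_⟩)
  · rintro ⟨k, hk1, hkr, rfl⟩
    exact ⟨⟨k - 1, by omega⟩, by simp [axisPt, Nat.cast_sub hk1]⟩
  · rintro ⟨k, rfl⟩
    exact ⟨k + 1, by omega, by omega, by simp [axisPt]⟩

theorem xpt_mem_Xset (i : Fin r) : xpt d r ι i ∈ Xset d r ι := mem_Xset_iff.2 (.inl ⟨i, rfl⟩)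

abbrev AxisLabelling (d r : ℕ) (ι : Fin d → Fin r) : Type :=
  ∀ j, Fin (r - 1) ≃ {i : Fin r // i ≠ ι j}

def part (g : AxisLabelling d r ι) (i : Fin r) : Set (Fin d → ℝ) :=
  insert (xpt d r ι i) {v | ∃ j k, (g j k : Fin r) = i ∧ axisPt d r j k = v}

section Part

variable (g : AxisLabelling d r ι)

theorem xpt_mem_part (i : Fin r) : xpt d r ι i ∈ part g i := Set.mem_insert _ _

theorem axisPt_mem_part_iff {i : Fin r} {j : Fin d} {k : Fin (r - 1)} :
    axisPt d r j k ∈ part g i ↔ (g j k : Fin r) = i := by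
  simp only [part, Set.mem_insert_iff, Set.mem_ofPred_eq, axisPt_inj]
  refine ⟨?_, fun h => .inr ⟨j, k, h, rfl, rfl⟩⟩
  rintro (h | ⟨j, k, h, rfl, rfl⟩)
  exacts [absurd h (axisPt_ne_xpt j k i), h]

theorem xpt_mem_part_iff (hd : 1 ≤ d) {i i' : Fin r} : xpt d r ι i' ∈ part g i ↔ i' = i := by
  simp only [part, Set.mem_insert_iff, Set.mem_ofPred_eq, (xpt_injective hd).eq_iff]
  refine ⟨?_, .inl⟩
  rintro (h | ⟨j, k, -, h⟩)
  exacts [h, absurd h (axisPt_ne_xpt j k i')]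

theorem iUnion_part : ⋃ i, part g i = Xset d r ι := by
  ext v
  simp only [Set.mem_iUnion, mem_Xset_iff]
  constructor
  · rintro ⟨i, rfl | ⟨j, k, -, rfl⟩⟩
    exacts [.inl ⟨i, rfl⟩, .inr ⟨j, k, rfl⟩]
  · rintro (⟨i, rfl⟩ | ⟨j, k, rfl⟩)
    exacts [⟨i, xpt_mem_part g i⟩, ⟨g j k, (axisPt_mem_part_iff g).2 rfl⟩]

theorem pairwise_disjoint_part (hd : 1 ≤ d) : Pairwise (Disjoint on part g) := by
  intro i i' hii'
  refine Set.disjoint_left.2 fun v hv hv' => ?_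
  obtain ⟨i₀, rfl⟩ | ⟨j, k, rfl⟩ :=
    mem_Xset_iff.1 ((iUnion_part g).subset (Set.mem_iUnion_of_mem i hv))
  · exact hii' (((xpt_mem_part_iff g hd).1 hv).symm.trans ((xpt_mem_part_iff g hd).1 hv'))
  · exact hii' (((axisPt_mem_part_iff g).1 hv).symm.trans ((axisPt_mem_part_iff g).1 hv'))

theorem part_injective (hd : 1 ≤ d) : Injective (part g) := fun i i' h =>
  (xpt_mem_part_iff g hd).1 (h ▸ xpt_mem_part g i : xpt d r ι i ∈ part g i')

theorem zero_mem_convexHull_part (i : Fin r) : (0 : Fin d → ℝ) ∈ convexHull ℝ (part g i) := by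
  let J := {j // ι j ≠ i}
  let k : J → Fin (r - 1) := fun j => (g j).symm ⟨i, j.2.symm⟩
  -- `x^i = -(i + 1) • ∑ j : J, e^j`, which these weights on the points `(k j + 1) e^j` cancel.
  let c : J → ℝ := fun j => ((i : ℕ) + 1 : ℝ) / ((k j : ℕ) + 1)
  refine zero_mem_convexHull_of_add_sum_smul_eq_zero (y := fun j : J => axisPt d r j (k j))
    (c := c) (xpt_mem_part g i) (fun j => (axisPt_mem_part_iff g).2 (by simp [k]))
    (fun j => by positivity) ?_
  funext j₀
  simp only [Pi.add_apply, Finset.sum_apply, Pi.smul_apply, smul_eq_mul, axisPt_apply, mul_ite,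
    mul_zero, Pi.zero_apply]
  by_cases h : ι j₀ = i
  · have hne (j : J) : j₀ ≠ j := fun he => j.2 (he ▸ h)
    simp [xpt, h, hne]
  · have hne (j : J) (hj : j ≠ ⟨j₀, h⟩) : j₀ ≠ j := fun he => hj (Subtype.ext he.symm)
    rw [Finset.sum_eq_single ⟨j₀, h⟩ (fun j _ hj => by simp [hne j hj]) (by simp)]
    simp [xpt, h, c]
    field_simp
    ring

end Part

theorem range_part_injective (hd : 1 ≤ d) :
    Injective fun g : AxisLabelling d r ι => Set.range (part g) := by
  intro g g' (h : Set.range (part g) = Set.range (part g'))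
  have hpart (i : Fin r) : part g i = part g' i := by
    obtain ⟨i', hi'⟩ : part g i ∈ Set.range (part g') := h ▸ Set.mem_range_self i
    have hi : xpt d r ι i ∈ part g' i' := hi' ▸ xpt_mem_part g i
    rw [← hi', (xpt_mem_part_iff g' hd).1 hi]
  refine funext fun j => Equiv.ext fun k => Subtype.ext ?_
  exact ((axisPt_mem_part_iff g').1 (hpart _ ▸ (axisPt_mem_part_iff g).2 rfl)).symm

theorem card_axisLabelling : Nat.card (AxisLabelling d r ι) = (r - 1).factorial ^ d := by
  simp [Nat.card_eq_fintype_card, Fintype.card_equiv (Fintype.equivOfCardEq _)]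

theorem exists_axisPt_eq_of_pos {v : Fin d → ℝ} (hv : v ∈ Xset d r ι) {j : Fin d}
    (hvj : 0 < v j) : ∃ k, axisPt d r j k = v := by
  rcases mem_Xset_iff.1 hv with ⟨i, rfl⟩ | ⟨j', k, rfl⟩
  · exact absurd hvj (xpt_nonpos i j).not_gt
  · obtain rfl : j' = j := by
      by_contra hj
      simp [axisPt_apply_of_ne k (Ne.symm hj)] at hvj
    exact ⟨k, rfl⟩

section Unindexed

variable {C : Set (Set (Fin d → ℝ))} {p : Fin d → ℝ}

theorem nonpos_of_forall_mem_convexHull (hcard : C.ncard = r) (hdisj : C.PairwiseDisjoint id)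
    (hcover : ⋃₀ C = Xset d r ι) (hp : ∀ S ∈ C, p ∈ convexHull ℝ S) (j : Fin d) : p j ≤ 0 := by
  by_contra! hpj
  have hmeet (S) (hS : S ∈ C) : ∃ k, axisPt d r j k ∈ S := by
    obtain ⟨v, hvS, hv⟩ := (LinearMap.proj j).exists_apply_ge_of_mem_convexHull (hp S hS)
    obtain ⟨k, rfl⟩ :=
      exists_axisPt_eq_of_pos (hcover ▸ Set.mem_sUnion_of_mem hvS hS) (hpj.trans_le hv)
    exact ⟨k, hvS⟩
  have hle := hdisj.ncard_le_of_forall_exists_mem _ hmeet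
  rw [hcard, Nat.card_fin] at hle
  have := (ι j).pos
  omega

theorem exists_xpt_mem (hcard : C.ncard = r) (hdisj : C.PairwiseDisjoint id)
    (hcover : ⋃₀ C = Xset d r ι) (hp : ∀ S ∈ C, p ∈ convexHull ℝ S) {S : Set (Fin d → ℝ)}
    (hS : S ∈ C) : ∃ i, xpt d r ι i ∈ S := by
  let coordSum : (Fin d → ℝ) →ₗ[ℝ] ℝ := ∑ j, LinearMap.proj j
  obtain ⟨v, hvS, hv⟩ := coordSum.exists_apply_le_of_mem_convexHull (hp S hS)
  rcases mem_Xset_iff.1 (hcover ▸ Set.mem_sUnion_of_mem hvS hS) with ⟨i, rfl⟩ | ⟨j, k, rfl⟩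
  · exact ⟨i, hvS⟩
  · have := Finset.sum_nonpos (s := Finset.univ) fun j _ =>
      nonpos_of_forall_mem_convexHull hcard hdisj hcover hp j
    simp only [coordSum, LinearMap.sum_apply, LinearMap.proj_apply, sum_axisPt] at hv
    linarith

theorem exists_indexing_by_xpt (hcard : C.ncard = r) (hdisj : C.PairwiseDisjoint id)
    (hcover : ⋃₀ C = Xset d r ι) (hp : ∀ S ∈ C, p ∈ convexHull ℝ S) :
    ∃ P : Fin r → Set (Fin d → ℝ),
      Pairwise (Disjoint on P) ∧ (∀ i, xpt d r ι i ∈ P i) ∧ C = Set.range P := by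
  have hx (i : Fin r) : ∃ S ∈ C, xpt d r ι i ∈ S := by
    rw [← Set.mem_sUnion, hcover]
    exact xpt_mem_Xset i
  choose P hPC hxP using hx
  have hrange : C = Set.range P := by
    refine Set.Subset.antisymm (fun S hS => ?_) (Set.range_subset_iff.2 hPC)
    obtain ⟨i, hi⟩ := exists_xpt_mem hcard hdisj hcover hp hS
    exact ⟨i, hdisj.elim_set (hPC i) hS _ (hxP i) hi⟩
  have hbij := (Set.rangeFactorization_surjective (f := P)).bijective_of_nat_card_le
    (by rw [Nat.card_coe_set_eq, ← hrange, hcard, Nat.card_fin])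
  have hinj : Injective P := fun i i' h => hbij.1 (Subtype.ext h)
  exact ⟨P, fun i i' hii' => hdisj (hPC i) (hPC i') (hinj.ne hii'), hxP, hrange⟩

end Unindexed

section Indexed

variable {P : Fin r → Set (Fin d → ℝ)}

theorem eq_zero_of_forall_mem_convexHull (hdisj : Pairwise (Disjoint on P))
    (hsub : ∀ i, P i ⊆ Xset d r ι) (hx : ∀ i, xpt d r ι i ∈ P i) {p : Fin d → ℝ}
    (hp : ∀ i, p ∈ convexHull ℝ (P i)) (hpnonpos : ∀ j, p j ≤ 0) : p = 0 := by
  funext j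
  obtain ⟨v, hvP, hv⟩ := (LinearMap.proj j).exists_apply_le_of_mem_convexHull (hp (ι j))
  have hvj : 0 ≤ v j := by
    rcases mem_Xset_iff.1 (hsub _ hvP) with ⟨i, rfl⟩ | ⟨j', k, rfl⟩
    · rw [hdisj.eq_of_mem_of_mem (hx i) hvP]
      simp [xpt]
    · rw [axisPt_apply]
      split_ifs <;> positivity
  exact le_antisymm (hpnonpos j) (hvj.trans hv)

theorem exists_axisPt_mem (hdisj : Pairwise (Disjoint on P)) (hsub : ∀ i, P i ⊆ Xset d r ι)
    (hx : ∀ i, xpt d r ι i ∈ P i) (h0 : ∀ i, (0 : Fin d → ℝ) ∈ convexHull ℝ (P i)) {i : Fin r}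
    {j : Fin d} (hij : ι j ≠ i) : ∃ k, axisPt d r j k ∈ P i := by
  -- `f` vanishes at `0` but is negative at `x^i` and on every axis other than `j`.
  let f : (Fin d → ℝ) →ₗ[ℝ] ℝ := ((d : ℝ) + 1) • LinearMap.proj j - ∑ j', LinearMap.proj j'
  obtain ⟨v, hvP, hv⟩ := f.exists_apply_ge_of_mem_convexHull (h0 i)
  rcases mem_Xset_iff.1 (hsub _ hvP) with ⟨i', rfl⟩ | ⟨j', k, rfl⟩
  · obtain rfl := hdisj.eq_of_mem_of_mem (hx i') hvP
    have hsum := neg_mul_le_sum_xpt (ι := ι) i'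
    have hxj : xpt d r ι i' j = -((i' : ℕ) + 1) := if_neg hij
    simp only [f, map_zero, LinearMap.sub_apply, LinearMap.smul_apply, LinearMap.sum_apply,
      LinearMap.proj_apply, hxj, smul_eq_mul] at hv
    linarith
  · obtain rfl : j' = j := by
      by_contra hj
      simp only [f, map_zero, LinearMap.sub_apply, LinearMap.smul_apply, LinearMap.sum_apply,
        LinearMap.proj_apply, axisPt_apply_of_ne k (Ne.symm hj), sum_axisPt,
        smul_eq_mul] at hv
      linarith
    exact ⟨k, hvP⟩

theorem exists_eq_part (hdisj : Pairwise (Disjoint on P)) (hcover : ⋃ i, P i = Xset d r ι)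
    (hx : ∀ i, xpt d r ι i ∈ P i) (h0 : ∀ i, (0 : Fin d → ℝ) ∈ convexHull ℝ (P i)) :
    ∃ g : AxisLabelling d r ι, P = part g := by
  have hsub (i : Fin r) : P i ⊆ Xset d r ι := hcover ▸ Set.subset_iUnion P i
  choose k hk using fun (j : Fin d) (i : {i // i ≠ ι j}) =>
    exists_axisPt_mem hdisj hsub hx h0 (Ne.symm i.2)
  have hbij (j : Fin d) : Bijective (k j) := by
    refine (Fintype.bijective_iff_injective_and_card _).2 ⟨fun i i' h => ?_, by simp⟩
    exact Subtype.ext (hdisj.eq_of_mem_of_mem (hk j i) (h ▸ hk j i'))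
  let g : AxisLabelling d r ι := fun j => (Equiv.ofBijective _ (hbij j)).symm
  refine ⟨g, hdisj.eq_of_subset_of_iUnion_subset (fun i => ?_) (by rw [hcover, iUnion_part])⟩
  rintro v (rfl | ⟨j, k', rfl, rfl⟩)
  · exact hx _
  · simpa [g, Equiv.ofBijective_apply_symm_apply] using hk j (g j k')

end Indexed

theorem exists_eq_range_part {C : Set (Set (Fin d → ℝ))} (hcard : C.ncard = r)
    (hdisj : C.PairwiseDisjoint id) (hcover : ⋃₀ C = Xset d r ι) {p : Fin d → ℝ}
    (hp : ∀ S ∈ C, p ∈ convexHull ℝ S) : ∃ g : AxisLabelling d r ι, C = Set.range (part g) := by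
  have hpnonpos := nonpos_of_forall_mem_convexHull hcard hdisj hcover hp
  obtain ⟨P, hPdisj, hxP, rfl⟩ := exists_indexing_by_xpt hcard hdisj hcover hp
  rw [Set.sUnion_range] at hcover
  have hpP (i : Fin r) : p ∈ convexHull ℝ (P i) := hp _ (Set.mem_range_self i)
  obtain rfl : p = 0 := eq_zero_of_forall_mem_convexHull hPdisj
    (fun i => hcover ▸ Set.subset_iUnion P i) hxP hpP hpnonpos
  obtain ⟨g, rfl⟩ := exists_eq_part hPdisj hcover hxP hpP
  exact ⟨g, rfl⟩

end TverbergConstruction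

open TverbergConstruction

theorem card_tverberg_partitions_general (d r : ℕ) (hd : 1 ≤ d) (ι : Fin d → Fin r) :
    {C : Set (Set (Fin d → ℝ)) |
        C.ncard = r ∧ C.PairwiseDisjoint id ∧ ⋃₀ C = Xset d r ι ∧
        ∃ p : Fin d → ℝ, ∀ S ∈ C, p ∈ convexHull ℝ S}.ncard
      = ((r - 1).factorial) ^ d := by
  have hset : {C : Set (Set (Fin d → ℝ)) |
        C.ncard = r ∧ C.PairwiseDisjoint id ∧ ⋃₀ C = Xset d r ι ∧
        ∃ p : Fin d → ℝ, ∀ S ∈ C, p ∈ convexHull ℝ S}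
      = Set.range fun g : AxisLabelling d r ι => Set.range (part g) := by
    ext C
    refine ⟨fun ⟨hcard, hdisj, hcover, p, hp⟩ => ?_, ?_⟩
    · obtain ⟨g, rfl⟩ := exists_eq_range_part hcard hdisj hcover hp
      exact ⟨g, rfl⟩
    · rintro ⟨g, rfl⟩
      refine ⟨(Set.ncard_range_of_injective (part_injective g hd)).trans (Nat.card_fin r),
        (pairwise_disjoint_part g hd).range_pairwise, (Set.sUnion_range _).trans (iUnion_part g),
        0, ?_⟩
      rintro _ ⟨i, rfl⟩
      exact zero_mem_convexHull_part g i
  rw [hset, Set.ncard_range_of_injective (range_part_injective hd), card_axisLabelling]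

/-- The constructed set `X` has exactly `((r-1)!)^d` Tverberg partitions into `r`
parts, counted as unordered partitions (families of pairwise disjoint sets covering
`X` whose convex hulls share a point). -/
theorem card_tverberg_partitions (d r : ℕ) (hd : 1 ≤ d) (hr : 1 ≤ r)
    (a : Fin r → ℕ) (hpos : ∀ i, 1 ≤ a i) (hle : ∀ i, a i ≤ d + 1)
    (hsum : ∑ i, a i = (d + 1) * (r - 1) + 1)
    (ι : Fin d → Fin r)
    (hι : ∀ i, (Finset.univ.filter fun j => ι j = i).card = d + 1 - a i) :
    {C : Set (Set (Fin d → ℝ)) |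
        C.ncard = r ∧ C.PairwiseDisjoint id ∧ ⋃₀ C = Xset d r ι ∧
        ∃ p : Fin d → ℝ, ∀ S ∈ C, p ∈ convexHull ℝ S}.ncard
      = ((r - 1).factorial) ^ d :=
  card_tverberg_partitions_general d r hd ι
end

section
/- Let X be the constructed set, and suppose X_1, ..., X_r is a Tverberg partition with x^i ∈ X_i. For each fixed i and each j with i ≠ i(j): since 0 ∈ conv(X_i) and x^i is the only point of X_i in A, there exist λ ∈ (0,1] and y ∈ conv(X_i \ A) with λ x^i + (1−λ) y = 0; moreover the j-th coordinate of y is strictly positive, which forces X_i ∩ A_j ≠ ∅. -/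
/-!
Since `x^i` is the only point of `X_i` in `A`, we have `X_i = {x^i} ∪ (X_i \ A)`, and every point
of `X_i \ A` lies in some `A_j`, hence has coordinate sum at least `1`. So `0 ∉ conv(X_i \ A)`, and
`0 ∈ conv(X_i)` puts `0` on a segment from `x^i` to some `y ∈ conv(X_i \ A)` with positive weight
on `x^i`. As `x^i_j < 0`, this forces `y_j > 0`; but if `X_i` missed `A_j`, every point of
`X_i \ A` would have `j`-th coordinate `0`, and so would `y`.
-/

open Finset Set

section ConvexJoin

variable {𝕜 E : Type*} [Field 𝕜] [LinearOrder 𝕜] [IsStrictOrderedRing 𝕜]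
  [AddCommGroup E] [Module 𝕜 E]

theorem exists_smul_add_smul_eq_zero_of_zero_mem_convexHull_insert {x : E} {S : Set E}
    (hx : x ≠ 0) (hS : (0 : E) ∉ convexHull 𝕜 S) (h0 : (0 : E) ∈ convexHull 𝕜 (insert x S)) :
    ∃ l ∈ Set.Ioc (0 : 𝕜) 1, ∃ y ∈ convexHull 𝕜 S, l • x + (1 - l) • y = 0 := by
  obtain rfl | hSne := S.eq_empty_or_nonempty
  · rw [insert_empty_eq, convexHull_singleton, mem_singleton_iff] at h0
    exact absurd h0.symm hx
  rw [convexHull_insert hSne, mem_convexJoin] at h0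
  obtain ⟨_, rfl, y, hy, l, b, hl, hb, hlb, hxy⟩ := h0
  obtain rfl : b = 1 - l := by linarith
  refine ⟨l, ⟨hl.lt_of_ne ?_, by linarith⟩, y, hy, hxy⟩
  rintro rfl
  rw [zero_smul, sub_zero, one_smul, zero_add] at hxy
  exact hS (hxy ▸ hy)

end ConvexJoin

theorem pos_apply_of_smul_add_smul_eq_zero {n : Type*} {x y : n → ℝ} {l : ℝ} {j : n}
    (hl : l ∈ Set.Ioc 0 1) (hxy : l • x + (1 - l) • y = 0) (hx : x j < 0) : 0 < y j := by
  have hj : l * x j + (1 - l) * y j = 0 := by simpa using congrFun hxy j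
  have : 0 < (1 - l) * y j := by nlinarith [hl.1]
  exact pos_of_mul_pos_right this (by linarith [hl.2])

theorem xpt_apply_neg {d r : ℕ} {ι : Fin d → Fin r} {i : Fin r} {j : Fin d} (hij : ι j ≠ i) :
    xpt d r ι i j < 0 := by
  rw [xpt, if_neg hij, neg_neg_iff_pos]
  positivity

theorem Xset_diff_Apts_subset (d r : ℕ) (ι : Fin d → Fin r) :
    Xset d r ι \ Apts d r ι ⊆ ⋃ j, Aset d r j := by
  rw [Xset, Set.union_sdiff_left]
  exact Set.sdiff_subset

theorem one_le_sum_of_mem_Aset {d r : ℕ} {j : Fin d} {v : Fin d → ℝ} (hv : v ∈ Aset d r j) :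
    1 ≤ ∑ j', v j' := by
  obtain ⟨k, hk, -, rfl⟩ := hv
  simp only [stdVec, Pi.smul_apply, Pi.single_apply, smul_eq_mul, mul_ite, mul_one, mul_zero,
    sum_ite_eq', Finset.mem_univ, ↓reduceIte]
  exact_mod_cast hk

theorem apply_eq_zero_of_mem_Aset {d r : ℕ} {j j' : Fin d} {v : Fin d → ℝ}
    (hv : v ∈ Aset d r j') (hj : j' ≠ j) : v j = 0 := by
  obtain ⟨k, -, -, rfl⟩ := hv
  simp [stdVec, hj.symm]

theorem zero_notMem_convexHull_of_subset_iUnion_Aset {d r : ℕ} {S : Set (Fin d → ℝ)}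
    (hS : S ⊆ ⋃ j, Aset d r j) : (0 : Fin d → ℝ) ∉ convexHull ℝ S := by
  have hsum : IsLinearMap ℝ fun v : Fin d → ℝ => ∑ j, v j :=
    ⟨fun _ _ => sum_add_distrib, fun _ _ => (mul_sum _ _ _).symm⟩
  have hsub : S ⊆ {v | 1 ≤ ∑ j, v j} := fun v hv => by
    obtain ⟨j, hvj⟩ := mem_iUnion.1 (hS hv)
    exact one_le_sum_of_mem_Aset hvj
  intro h0
  exact absurd (convexHull_min hsub (convex_halfSpace_ge hsum 1) h0) (by norm_num)

theorem inter_Aset_nonempty_of_pos_apply {d r : ℕ} {S : Set (Fin d → ℝ)}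
    (hS : S ⊆ ⋃ j, Aset d r j) {y : Fin d → ℝ} (hy : y ∈ convexHull ℝ S) {j : Fin d}
    (hyj : 0 < y j) : (S ∩ Aset d r j).Nonempty := by
  by_contra hempty
  have hsub : S ⊆ {v | v j = 0} := fun v hv => by
    obtain ⟨j', hvj'⟩ := mem_iUnion.1 (hS hv)
    refine apply_eq_zero_of_mem_Aset hvj' ?_
    rintro rfl
    exact hempty ⟨v, hv, hvj'⟩
  have hproj : IsLinearMap ℝ fun v : Fin d → ℝ => v j := ⟨fun _ _ => rfl, fun _ _ => rfl⟩
  exact hyj.ne' (convexHull_min hsub (convex_hyperplane hproj 0) hy)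

theorem part_meets_Aj_nonempty_general (d r : ℕ)
    (ι : Fin d → Fin r)
    (Xi : Set (Fin d → ℝ)) (hXi : Xi ⊆ Xset d r ι)
    (i : Fin r) (j : Fin d) (hij : ι j ≠ i)
    (h0 : (0 : Fin d → ℝ) ∈ convexHull ℝ Xi)
    (hA : Xi ∩ Apts d r ι = {xpt d r ι i}) :
    (∃ l ∈ Set.Ioc (0 : ℝ) 1, ∃ y ∈ convexHull ℝ (Xi \ Apts d r ι),
        l • xpt d r ι i + (1 - l) • y = 0 ∧ 0 < y j) ∧
      (Xi ∩ Aset d r j).Nonempty := by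
  have hS : Xi \ Apts d r ι ⊆ ⋃ j, Aset d r j :=
    (Set.sdiff_subset_sdiff_left hXi).trans (Xset_diff_Apts_subset d r ι)
  have hXi_eq : insert (xpt d r ι i) (Xi \ Apts d r ι) = Xi := by
    rw [← singleton_union, ← hA, Set.inter_union_sdiff]
  have hx := xpt_apply_neg hij
  obtain ⟨l, hl, y, hy, hly⟩ := exists_smul_add_smul_eq_zero_of_zero_mem_convexHull_insert
    (fun h => hx.ne (congrFun h j)) (zero_notMem_convexHull_of_subset_iUnion_Aset hS)
    (by rwa [hXi_eq])
  have hyj := pos_apply_of_smul_add_smul_eq_zero hl hly hx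
  exact ⟨⟨l, hl, y, hy, hly, hyj⟩,
    (inter_Aset_nonempty_of_pos_apply hS hy hyj).mono (inter_subset_inter_left _ Set.sdiff_subset)⟩

/-- If `0 ∈ conv(X_i)` and `x^i` is the only point of `X_i` in `A`, then there are
`λ ∈ (0,1]` and `y ∈ conv(X_i \ A)` with `λx^i + (1-λ)y = 0`; moreover for any `j`
with `i ≠ i(j)` the `j`-th coordinate of `y` is positive, forcing `X_i ∩ A_j ≠ ∅`. -/
theorem part_meets_Aj_nonempty (d r : ℕ) (hd : 1 ≤ d) (hr : 1 ≤ r)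
    (a : Fin r → ℕ) (hpos : ∀ i, 1 ≤ a i) (hle : ∀ i, a i ≤ d + 1)
    (hsum : ∑ i, a i = (d + 1) * (r - 1) + 1)
    (ι : Fin d → Fin r)
    (hι : ∀ i', (Finset.univ.filter fun j => ι j = i').card = d + 1 - a i')
    (Xi : Set (Fin d → ℝ)) (hXi : Xi ⊆ Xset d r ι)
    (i : Fin r) (j : Fin d) (hij : ι j ≠ i)
    (h0 : (0 : Fin d → ℝ) ∈ convexHull ℝ Xi)
    (hA : Xi ∩ Apts d r ι = {xpt d r ι i}) :
    (∃ l ∈ Set.Ioc (0 : ℝ) 1, ∃ y ∈ convexHull ℝ (Xi \ Apts d r ι),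
        l • xpt d r ι i + (1 - l) • y = 0 ∧ 0 < y j) ∧
      (Xi ∩ Aset d r j).Nonempty :=
  part_meets_Aj_nonempty_general d r ι Xi hXi i j hij h0 hA
end
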